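/- arXiv:2601.18520 — 14 statements merged into one kernel-verified Lean document; each statement's English description precedes it below -/
import Mathlib

section
/- Let the block lower-triangular preconditioner M̂_LT = [[A, 0, 0], [B, −S₁, 0], [0, C, Ŝ₂]] be invertible (equivalently, A, S₁ and Ŝ₂ are invertible). Then M̂_LT⁻¹ K equals the block upper-triangular matrix [[Iₙ, A⁻¹Bᵀ, 0], [0, Iₘ, −S₁⁻¹Cᵀ], [0, 0, Ŝ₂⁻¹S₂]]. -/
open Matrix

/-!
`M̂_LT` times the claimed block upper-triangular matrix `U` multiplies out, block by block, to `K`: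
the `(2,2)` block is `B A⁻¹ Bᵀ - S₁ = -D` by the definition of `S₁`, and the `(3,3)` block is
`-C S₁⁻¹ Cᵀ + S₂ = 0` by the definition of `S₂`. Since `det M̂_LT = ± det A · det S₁ · det Ŝ₂` is a
unit, multiplying `M̂_LT * U = K` by `M̂_LT⁻¹` on the left gives the claim.
-/

section BlockLowerTriangular

variable {R : Type*} [CommRing R] {n m p : Type*}
  [Fintype n] [Fintype m] [Fintype p] [DecidableEq n] [DecidableEq m] [DecidableEq p]

theorem isUnit_det_fromBlocks_lowerTriangular {A : Matrix n n R} {B : Matrix m n R}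
    {S : Matrix m m R} {C : Matrix p m R} {T : Matrix p p R}
    (hA : IsUnit A.det) (hS : IsUnit S.det) (hT : IsUnit T.det) :
    IsUnit (fromBlocks (fromBlocks A 0 B (-S)) 0 (fromCols 0 C) T).det := by
  rw [det_fromBlocks_zero₁₂, det_fromBlocks_zero₁₂, det_neg]
  exact (hA.mul ((isUnit_one.neg.pow _).mul hS)).mul hT

theorem fromBlocks_lowerTriangular_mul_upperTriangular_eq_doubleSaddlePoint
    {A : Matrix n n R} {B : Matrix m n R} {C : Matrix p m R} {D : Matrix m m R}
    {S₁ : Matrix m m R} {S₂ T : Matrix p p R}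
    (hA : IsUnit A.det) (hS₁ : IsUnit S₁.det) (hT : IsUnit T.det)
    (hS₁def : S₁ = D + B * A⁻¹ * Bᵀ) (hS₂def : S₂ = C * S₁⁻¹ * Cᵀ) :
    fromBlocks (fromBlocks A 0 B (-S₁)) 0 (fromCols 0 C) T *
        fromBlocks (fromBlocks 1 (A⁻¹ * Bᵀ) 0 1) (fromRows 0 (-(S₁⁻¹ * Cᵀ))) 0 (T⁻¹ * S₂) =
      fromBlocks (fromBlocks A Bᵀ B (-D)) (fromRows 0 Cᵀ) (fromCols 0 C) 0 := by
  have h₁₂ : A * (A⁻¹ * Bᵀ) = Bᵀ := mul_nonsing_inv_cancel_left _ _ hA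
  have h₂₂ : B * (A⁻¹ * Bᵀ) + -S₁ = -D := by
    rw [hS₁def, ← Matrix.mul_assoc]; abel
  have h₂₃ : -S₁ * -(S₁⁻¹ * Cᵀ) = Cᵀ := by
    rw [Matrix.neg_mul, Matrix.mul_neg, neg_neg, mul_nonsing_inv_cancel_left _ _ hS₁]
  have h₃₃ : -(C * (S₁⁻¹ * Cᵀ)) + T * (T⁻¹ * S₂) = 0 := by
    rw [mul_nonsing_inv_cancel_left _ _ hT, hS₂def, Matrix.mul_assoc, neg_add_cancel]
  rw [fromBlocks_multiply, fromBlocks_multiply, fromBlocks_mul_fromRows,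
    fromCols_mul_fromBlocks, fromCols_mul_fromRows]
  simp [h₁₂, h₂₂, h₂₃, h₃₃]

end BlockLowerTriangular

/-- If the block lower-triangular preconditioner
`M̂_LT = [[A, 0, 0], [B, −S₁, 0], [0, C, hatS₂]]` is invertible (equivalently, `A`, `S₁`
and `hatS₂` are invertible), then `M̂_LT⁻¹ K` equals the block upper-triangular matrix
`[[Iₙ, A⁻¹Bᵀ, 0], [0, Iₘ, −S₁⁻¹Cᵀ], [0, 0, hatS₂⁻¹S₂]]`. -/
theorem stmt_0 (n m p : ℕ)
    (A : Matrix (Fin n) (Fin n) ℝ) (B : Matrix (Fin m) (Fin n) ℝ)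
    (C : Matrix (Fin p) (Fin m) ℝ) (D : Matrix (Fin m) (Fin m) ℝ)
    (S₁ : Matrix (Fin m) (Fin m) ℝ) (hS₁def : S₁ = D + B * A⁻¹ * Bᵀ)
    (S₂ : Matrix (Fin p) (Fin p) ℝ) (hS₂def : S₂ = C * S₁⁻¹ * Cᵀ)
    (hatS₂ : Matrix (Fin p) (Fin p) ℝ)
    (hA : IsUnit A.det) (hS₁ : IsUnit S₁.det) (hhatS₂ : IsUnit hatS₂.det)
    (K MLT : Matrix ((Fin n ⊕ Fin m) ⊕ Fin p) ((Fin n ⊕ Fin m) ⊕ Fin p) ℝ)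
    (hK : K = fromBlocks (fromBlocks A Bᵀ B (-D)) (fromRows 0 Cᵀ) (fromCols 0 C) 0)
    (hMLT : MLT = fromBlocks (fromBlocks A 0 B (-S₁)) 0 (fromCols 0 C) hatS₂) :
    MLT⁻¹ * K =
      fromBlocks (fromBlocks 1 (A⁻¹ * Bᵀ) 0 1) (fromRows 0 (-(S₁⁻¹ * Cᵀ)))
        0 (hatS₂⁻¹ * S₂) := by
  subst hK hMLT
  rw [← fromBlocks_lowerTriangular_mul_upperTriangular_eq_doubleSaddlePoint hA hS₁ hhatS₂
    hS₁def hS₂def]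
  exact nonsing_inv_mul_cancel_left _ _ (isUnit_det_fromBlocks_lowerTriangular hA hS₁ hhatS₂)
end

section
/- Let A, S₁ and Ŝ₂ be invertible and let M̂_LT = [[A, 0, 0], [B, −S₁, 0], [0, C, Ŝ₂]]. Then the characteristic polynomial of M̂_LT⁻¹ K equals (X − 1)^{n+m} times the characteristic polynomial of Ŝ₂⁻¹S₂; in particular, every eigenvalue of M̂_LT⁻¹ K is either 1 or an eigenvalue μ of Ŝ₂⁻¹S₂, i.e. a generalized eigenvalue of S₂ z = μ Ŝ₂ z. -/
open Matrix Polynomial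

/-!
The preconditioner factors the double saddle-point matrix as `K = M̂_LT * T` with
`T = [[1, A⁻¹Bᵀ, 0], [0, 1, -S₁⁻¹Cᵀ], [0, 0, Ŝ₂⁻¹S₂]]`: this is block elimination, which is
where `S₁` and `S₂` come from. So `M̂_LT⁻¹ K = T` is block upper triangular with identity
leading blocks, and its characteristic polynomial is `(X - 1)^{n+m}` times that of `Ŝ₂⁻¹S₂`.
-/

namespace Matrix

section Factorization

variable {R : Type*} [CommRing R] {l m p : Type*} [Fintype l] [Fintype m] [Fintype p]
  [DecidableEq l] [DecidableEq m] [DecidableEq p]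
  (A : Matrix l l R) (B : Matrix m l R) (C : Matrix p m R) (D S₁ : Matrix m m R)
  (Ŝ₂ : Matrix p p R)

theorem isUnit_det_fromBlocks_lowerPrecond (hA : IsUnit A.det) (hS₁ : IsUnit S₁.det)
    (hŜ₂ : IsUnit Ŝ₂.det) :
    IsUnit (fromBlocks (fromBlocks A 0 B (-S₁)) 0 (fromCols 0 C) Ŝ₂).det := by
  rw [det_fromBlocks_zero₁₂, det_fromBlocks_zero₁₂, det_neg]
  exact (hA.mul ((isUnit_one.neg.pow _).mul hS₁)).mul hŜ₂

theorem fromBlocks_lowerPrecond_mul_eq_doubleSaddle (hS₁def : S₁ = D + B * A⁻¹ * Bᵀ)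
    (hA : IsUnit A.det) (hS₁ : IsUnit S₁.det) (hŜ₂ : IsUnit Ŝ₂.det) :
    fromBlocks (fromBlocks A 0 B (-S₁)) 0 (fromCols 0 C) Ŝ₂ *
        fromBlocks (fromBlocks 1 (A⁻¹ * Bᵀ) 0 1) (fromRows 0 (-(S₁⁻¹ * Cᵀ))) 0
          (Ŝ₂⁻¹ * (C * S₁⁻¹ * Cᵀ)) =
      fromBlocks (fromBlocks A Bᵀ B (-D)) (fromRows 0 Cᵀ) (fromCols 0 C) 0 := by
  simp only [fromBlocks_multiply, fromBlocks_mul_fromRows, fromCols_mul_fromBlocks,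
    fromCols_mul_fromRows, ← Matrix.mul_assoc, mul_nonsing_inv _ hA, mul_nonsing_inv _ hS₁,
    mul_nonsing_inv _ hŜ₂, Matrix.mul_zero, Matrix.zero_mul, Matrix.mul_one, Matrix.one_mul,
    Matrix.mul_neg, Matrix.neg_mul, neg_zero, neg_neg, add_zero, zero_add, neg_add_cancel,
    fromBlocks_inj, true_and, and_true]
  rw [hS₁def]
  abel

theorem inv_fromBlocks_lowerPrecond_mul_doubleSaddle (hS₁def : S₁ = D + B * A⁻¹ * Bᵀ)
    (hA : IsUnit A.det) (hS₁ : IsUnit S₁.det) (hŜ₂ : IsUnit Ŝ₂.det) :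
    (fromBlocks (fromBlocks A 0 B (-S₁)) 0 (fromCols 0 C) Ŝ₂)⁻¹ *
        fromBlocks (fromBlocks A Bᵀ B (-D)) (fromRows 0 Cᵀ) (fromCols 0 C) 0 =
      fromBlocks (fromBlocks 1 (A⁻¹ * Bᵀ) 0 1) (fromRows 0 (-(S₁⁻¹ * Cᵀ))) 0
        (Ŝ₂⁻¹ * (C * S₁⁻¹ * Cᵀ)) := by
  rw [← fromBlocks_lowerPrecond_mul_eq_doubleSaddle A B C D S₁ Ŝ₂ hS₁def hA hS₁ hŜ₂,
    nonsing_inv_mul_cancel_left _ _ (isUnit_det_fromBlocks_lowerPrecond A B C S₁ Ŝ₂ hA hS₁ hŜ₂)]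

theorem charpoly_fromBlocks_unitriangular (X₁₂ : Matrix l m R) (Y : Matrix (l ⊕ m) p R)
    (W : Matrix p p R) :
    (fromBlocks (fromBlocks 1 X₁₂ 0 1) Y 0 W).charpoly =
      (X - 1) ^ (Fintype.card l + Fintype.card m) * W.charpoly := by
  rw [charpoly_fromBlocks_zero₂₁, charpoly_fromBlocks_zero₂₁, charpoly_one, charpoly_one, pow_add]

end Factorization

section Eigenvectors

variable {K : Type*} [CommRing K] [IsDomain K] {p : Type*} [Fintype p] [DecidableEq p]

theorem exists_mulVec_eq_smul_of_isRoot_charpoly {W : Matrix p p K} {μ : K}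
    (hμ : W.charpoly.IsRoot μ) : ∃ v ≠ 0, W *ᵥ v = μ • v := by
  rw [IsRoot, eval_charpoly, ← exists_mulVec_eq_zero_iff] at hμ
  obtain ⟨v, hv, hWv⟩ := hμ
  refine ⟨v, hv, ?_⟩
  rw [sub_mulVec, scalar_apply, ← smul_one_eq_diagonal, smul_mulVec, one_mulVec,
    sub_eq_zero] at hWv
  exact hWv.symm

theorem exists_mulVec_eq_smul_mulVec_of_isRoot_charpoly {M N W : Matrix p p K} {μ : K}
    (hNW : N * W = M) (hμ : W.charpoly.IsRoot μ) : ∃ z ≠ 0, M *ᵥ z = μ • (N *ᵥ z) := by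
  obtain ⟨z, hz, hWz⟩ := exists_mulVec_eq_smul_of_isRoot_charpoly hμ
  exact ⟨z, hz, by rw [← hNW, ← mulVec_mulVec, hWz, mulVec_smul]⟩

end Eigenvectors

end Matrix

/-- With `A`, `S₁`, `Ŝ₂` invertible and
`M̂_LT = [[A, 0, 0], [B, −S₁, 0], [0, C, Ŝ₂]]`, the characteristic polynomial of
`M̂_LT⁻¹ K` equals `(X − 1)^{n+m}` times the characteristic polynomial of `Ŝ₂⁻¹S₂`;
in particular, every eigenvalue of `M̂_LT⁻¹ K` is either `1` or an eigenvalue `μ` of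
`Ŝ₂⁻¹S₂`, i.e. a generalized eigenvalue of `S₂ z = μ Ŝ₂ z`. -/
theorem stmt_1 (n m p : ℕ)
    (A : Matrix (Fin n) (Fin n) ℝ) (B : Matrix (Fin m) (Fin n) ℝ)
    (C : Matrix (Fin p) (Fin m) ℝ) (D : Matrix (Fin m) (Fin m) ℝ)
    (S₁ : Matrix (Fin m) (Fin m) ℝ) (hS₁def : S₁ = D + B * A⁻¹ * Bᵀ)
    (S₂ : Matrix (Fin p) (Fin p) ℝ) (hS₂def : S₂ = C * S₁⁻¹ * Cᵀ)
    (hatS₂ : Matrix (Fin p) (Fin p) ℝ)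
    (hA : IsUnit A.det) (hS₁ : IsUnit S₁.det) (hhatS₂ : IsUnit hatS₂.det)
    (K MLT : Matrix ((Fin n ⊕ Fin m) ⊕ Fin p) ((Fin n ⊕ Fin m) ⊕ Fin p) ℝ)
    (hK : K = fromBlocks (fromBlocks A Bᵀ B (-D)) (fromRows 0 Cᵀ) (fromCols 0 C) 0)
    (hMLT : MLT = fromBlocks (fromBlocks A 0 B (-S₁)) 0 (fromCols 0 C) hatS₂) :
    (MLT⁻¹ * K).charpoly = (X - 1) ^ (n + m) * (hatS₂⁻¹ * S₂).charpoly ∧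
      ∀ μ : ℂ, (((MLT⁻¹ * K).map (Complex.ofReal : ℝ → ℂ)).charpoly).IsRoot μ →
        μ = 1 ∨ ((((hatS₂⁻¹ * S₂).map (Complex.ofReal : ℝ → ℂ)).charpoly).IsRoot μ ∧
          ∃ z : Fin p → ℂ, z ≠ 0 ∧
            (S₂.map (Complex.ofReal : ℝ → ℂ)) *ᵥ z =
              μ • ((hatS₂.map (Complex.ofReal : ℝ → ℂ)) *ᵥ z)) := by
  have hcharpoly : (MLT⁻¹ * K).charpoly = (X - 1) ^ (n + m) * (hatS₂⁻¹ * S₂).charpoly := by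
    rw [hK, hMLT, inv_fromBlocks_lowerPrecond_mul_doubleSaddle A B C D S₁ hatS₂ hS₁def hA hS₁
      hhatS₂, charpoly_fromBlocks_unitriangular, Fintype.card_fin, Fintype.card_fin, hS₂def]
  refine ⟨hcharpoly, fun μ hμ => ?_⟩
  rw [show (Complex.ofReal : ℝ → ℂ) = Complex.ofRealHom from rfl] at hμ ⊢
  rw [charpoly_map, hcharpoly, Polynomial.map_mul, IsRoot, eval_mul, mul_eq_zero] at hμ
  rcases hμ with hone | hroot
  · left
    simp only [Polynomial.map_pow, Polynomial.map_sub, Polynomial.map_X, Polynomial.map_one,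
      eval_pow, eval_sub, eval_X, eval_one] at hone
    exact sub_eq_zero.mp (eq_zero_of_pow_eq_zero hone)
  · right
    rw [← charpoly_map] at hroot
    refine ⟨hroot, exists_mulVec_eq_smul_mulVec_of_isRoot_charpoly ?_ hroot⟩
    rw [← Matrix.map_mul, ← Matrix.mul_assoc, mul_nonsing_inv _ hhatS₂, Matrix.one_mul]
end

section
/- Assume A, S₁ and Ŝ₂ are invertible, and let M̂_D = diag(A, S₁, Ŝ₂). Suppose λ ∈ ℝ with λ ≠ −1, and (0, y, z) ∈ ℝⁿ × ℝᵐ × ℝᵖ with (y, z) ≠ (0, 0) satisfies M̂_D⁻¹ K (0, y, z)ᵀ = λ (0, y, z)ᵀ. Then z ≠ 0 and Ŝ₂⁻¹ S₂ z = λ(λ+1) z; consequently μ := λ(λ+1) is an eigenvalue of Ŝ₂⁻¹S₂ and λ = (−1 + √(1+4μ))/2 or λ = (−1 − √(1+4μ))/2. -/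
/-!
Multiplied by `M̂_D`, the eigen-equation splits into `Bᵀ y = 0`, `Cᵀ z - D y = λ S₁ y` and
`C y = λ Ŝ₂ z`. The first gives `S₁ y = D y`, so the second becomes `S₁⁻¹ Cᵀ z = (λ + 1) y`;
since `λ ≠ -1` this forces `z ≠ 0`, and together with the third it gives
`Ŝ₂⁻¹ C S₁⁻¹ Cᵀ z = λ (λ + 1) z`. The formula for `λ` holds because `1 + 4 λ (λ + 1) = (2 λ + 1)²`.
-/

open Matrix

lemma Sum.smul_elim {α β M S : Type*} [SMul S M] (c : S) (f : α → M) (g : β → M) :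
    c • Sum.elim f g = Sum.elim (c • f) (c • g) := by
  ext (i | i) <;> rfl

namespace Matrix

variable {R : Type*} {l m p : Type*} [Fintype l] [Fintype m] [Fintype p]

lemma inv_mul_mulVec_eq_smul_iff [CommRing R] [DecidableEq l] {M K : Matrix l l R}
    (hM : IsUnit M.det) (c : R) (v : l → R) :
    (M⁻¹ * K) *ᵥ v = c • v ↔ K *ᵥ v = c • (M *ᵥ v) := by
  rw [← mulVec_mulVec]
  constructor
  · intro h
    rw [← mulVec_smul, ← h, mulVec_mulVec, mul_nonsing_inv M hM, one_mulVec]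
  · intro h
    rw [h, mulVec_smul, mulVec_mulVec, nonsing_inv_mul M hM, one_mulVec]

lemma det_fromBlocks_diagonal₃ [CommRing R] [DecidableEq l] [DecidableEq m] [DecidableEq p]
    (A : Matrix l l R) (S : Matrix m m R) (T : Matrix p p R) :
    (fromBlocks (fromBlocks A 0 0 S) 0 0 T).det = A.det * S.det * T.det := by
  rw [det_fromBlocks_zero₂₁, det_fromBlocks_zero₂₁]

lemma fromBlocks_diagonal₃_mulVec_zero_sumElim [Semiring R]
    (A : Matrix l l R) (S : Matrix m m R) (T : Matrix p p R) (y : m → R) (z : p → R) :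
    fromBlocks (fromBlocks A 0 0 S) 0 0 T *ᵥ Sum.elim (Sum.elim (0 : l → R) y) z =
      Sum.elim (Sum.elim (0 : l → R) (S *ᵥ y)) (T *ᵥ z) := by
  simp [fromBlocks_mulVec]

lemma doubleSaddlePoint_mulVec_zero_sumElim [Ring R]
    (A : Matrix l l R) (B : Matrix m l R) (C : Matrix p m R) (D : Matrix m m R)
    (y : m → R) (z : p → R) :
    fromBlocks (fromBlocks A Bᵀ B (-D)) (fromRows 0 Cᵀ) (fromCols 0 C) 0 *ᵥ
        Sum.elim (Sum.elim (0 : l → R) y) z =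
      Sum.elim (Sum.elim (Bᵀ *ᵥ y) (Cᵀ *ᵥ z - D *ᵥ y)) (C *ᵥ y) := by
  simp [fromBlocks_mulVec, fromRows_mulVec, neg_mulVec, ← Sum.elim_add_add, sub_eq_neg_add]

section CommRing

variable [CommRing R] {C : Matrix p m R} {D S₁ : Matrix m m R} {y : m → R} {z : p → R} {c : R}

lemma add_mul_inv_mul_transpose_mulVec_of_transpose_mulVec_eq_zero [DecidableEq l]
    (A : Matrix l l R) {B : Matrix m l R} (hBy : Bᵀ *ᵥ y = 0) :
    (D + B * A⁻¹ * Bᵀ) *ᵥ y = D *ᵥ y := by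
  rw [add_mulVec, ← mulVec_mulVec, hBy, mulVec_zero, add_zero]

lemma inv_mulVec_transpose_mulVec_eq_smul [DecidableEq m] (hS₁ : IsUnit S₁.det)
    (hS₁y : S₁ *ᵥ y = D *ᵥ y) (h : Cᵀ *ᵥ z - D *ᵥ y = c • (S₁ *ᵥ y)) :
    S₁⁻¹ *ᵥ (Cᵀ *ᵥ z) = (c + 1) • y := by
  have hCz : Cᵀ *ᵥ z = (c + 1) • (S₁ *ᵥ y) := by
    rw [add_smul, one_smul, ← sub_eq_iff_eq_add, ← h, hS₁y]
  rw [hCz, mulVec_smul, mulVec_mulVec, nonsing_inv_mul S₁ hS₁, one_mulVec]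

lemma ne_zero_of_inv_mulVec_transpose_mulVec_eq_smul [IsDomain R] [DecidableEq m]
    (hc : c + 1 ≠ 0) (hyz : ¬(y = 0 ∧ z = 0)) (h : S₁⁻¹ *ᵥ (Cᵀ *ᵥ z) = (c + 1) • y) :
    z ≠ 0 := by
  rintro rfl
  refine hyz ⟨?_, rfl⟩
  rw [mulVec_zero, mulVec_zero, eq_comm, smul_eq_zero] at h
  exact h.resolve_left hc

lemma inv_mul_mul_inv_mul_transpose_mulVec_eq_smul [DecidableEq m] [DecidableEq p]
    {T : Matrix p p R} (hT : IsUnit T.det) (h : S₁⁻¹ *ᵥ (Cᵀ *ᵥ z) = (c + 1) • y)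
    (hCy : C *ᵥ y = c • (T *ᵥ z)) :
    (T⁻¹ * (C * S₁⁻¹ * Cᵀ)) *ᵥ z = (c * (c + 1)) • z := by
  rw [← mulVec_mulVec, ← mulVec_mulVec, ← mulVec_mulVec, h, mulVec_smul, hCy, mulVec_smul,
    mulVec_smul, mulVec_mulVec, nonsing_inv_mul T hT, one_mulVec, smul_smul, mul_comm]

end CommRing

end Matrix

lemma Real.eq_neg_one_add_sqrt_or_eq_neg_one_sub_sqrt (x : ℝ) :
    x = (-1 + √(1 + 4 * (x * (x + 1)))) / 2 ∨ x = (-1 - √(1 + 4 * (x * (x + 1)))) / 2 := by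
  have hsq : 1 + 4 * (x * (x + 1)) = (2 * x + 1) ^ 2 := by ring
  rw [hsq, Real.sqrt_sq_eq_abs]
  rcases abs_cases (2 * x + 1) with ⟨h, _⟩ | ⟨h, _⟩
  · left; rw [h]; ring
  · right; rw [h]; ring

/-- With `A`, `S₁`, `Ŝ₂` invertible and `M̂_D = diag(A, S₁, Ŝ₂)`:
if `λ ≠ −1` and `(0, y, z)` with `(y, z) ≠ (0, 0)` satisfies
`M̂_D⁻¹ K (0, y, z)ᵀ = λ (0, y, z)ᵀ`, then `z ≠ 0` and `Ŝ₂⁻¹ S₂ z = λ(λ+1) z`;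
consequently `μ := λ(λ+1)` is an eigenvalue of `Ŝ₂⁻¹S₂` and
`λ = (−1 + √(1+4μ))/2` or `λ = (−1 − √(1+4μ))/2`. -/
theorem stmt_2 (n m p : ℕ)
    (A : Matrix (Fin n) (Fin n) ℝ) (B : Matrix (Fin m) (Fin n) ℝ)
    (C : Matrix (Fin p) (Fin m) ℝ) (D : Matrix (Fin m) (Fin m) ℝ)
    (S₁ : Matrix (Fin m) (Fin m) ℝ) (hS₁def : S₁ = D + B * A⁻¹ * Bᵀ)
    (S₂ : Matrix (Fin p) (Fin p) ℝ) (hS₂def : S₂ = C * S₁⁻¹ * Cᵀ)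
    (hatS₂ : Matrix (Fin p) (Fin p) ℝ)
    (hA : IsUnit A.det) (hS₁ : IsUnit S₁.det) (hhatS₂ : IsUnit hatS₂.det)
    (K MD : Matrix ((Fin n ⊕ Fin m) ⊕ Fin p) ((Fin n ⊕ Fin m) ⊕ Fin p) ℝ)
    (hK : K = fromBlocks (fromBlocks A Bᵀ B (-D)) (fromRows 0 Cᵀ) (fromCols 0 C) 0)
    (hMD : MD = fromBlocks (fromBlocks A 0 0 S₁) 0 0 hatS₂)
    (lam : ℝ) (hlam : lam ≠ -1)
    (y : Fin m → ℝ) (z : Fin p → ℝ) (hyz : ¬(y = 0 ∧ z = 0))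
    (heig : (MD⁻¹ * K) *ᵥ Sum.elim (Sum.elim (0 : Fin n → ℝ) y) z =
      lam • Sum.elim (Sum.elim (0 : Fin n → ℝ) y) z) :
    z ≠ 0 ∧ (hatS₂⁻¹ * S₂) *ᵥ z = (lam * (lam + 1)) • z ∧
      (lam = (-1 + Real.sqrt (1 + 4 * (lam * (lam + 1)))) / 2 ∨
        lam = (-1 - Real.sqrt (1 + 4 * (lam * (lam + 1)))) / 2) := by
  have hMDdet : IsUnit MD.det := by
    rw [hMD, det_fromBlocks_diagonal₃]
    exact (hA.mul hS₁).mul hhatS₂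
  rw [inv_mul_mulVec_eq_smul_iff hMDdet, hK, hMD, doubleSaddlePoint_mulVec_zero_sumElim,
    fromBlocks_diagonal₃_mulVec_zero_sumElim, Sum.smul_elim, Sum.smul_elim, smul_zero,
    Sum.elim_eq_iff, Sum.elim_eq_iff] at heig
  obtain ⟨⟨hBy, hy⟩, hCy⟩ := heig
  have hS₁y : S₁ *ᵥ y = D *ᵥ y :=
    hS₁def ▸ add_mul_inv_mul_transpose_mulVec_of_transpose_mulVec_eq_zero A hBy
  have hCz := inv_mulVec_transpose_mulVec_eq_smul hS₁ hS₁y hy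
  have hlam1 : lam + 1 ≠ 0 := by rwa [Ne, add_eq_zero_iff_eq_neg]
  exact ⟨ne_zero_of_inv_mulVec_transpose_mulVec_eq_smul hlam1 hyz hCz,
    hS₂def ▸ inv_mul_mul_inv_mul_transpose_mulVec_eq_smul hhatS₂ hCz hCy,
    Real.eq_neg_one_add_sqrt_or_eq_neg_one_sub_sqrt lam⟩
end

section
/- (Theorem 2.1, part 1, construction) Under the stated assumptions, for every x ∈ ℝⁿ with Bx = 0 and x ≠ 0, the vector (x, 0, 0) is an eigenvector of the preconditioned matrix T = M̂_D⁻¹ K with eigenvalue λ = 1. -/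
/-!
Since `Bx = 0`, both `K` and `M̂_D` send `(x, 0, 0)` to `(Ax, 0, 0)`, so `T` fixes it as soon
as `M̂_D` is invertible. That holds because `A`, `Ŝ₂` and the Schur complement `S₁ = B A⁻¹ Bᵀ`
are positive definite, the last one because `Bᵀ` is injective when `B` has full row rank.
-/

open Matrix

namespace Matrix

theorem vecMul_injective_of_rank_eq_card {m n R : Type*} [Field R] [Fintype m] [Fintype n]
    {M : Matrix m n R} (hM : M.rank = Fintype.card m) : Function.Injective M.vecMul := by
  rw [vecMul_injective_iff, linearIndependent_iff_card_eq_finrank_span, Set.finrank,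
    ← rank_eq_finrank_span_row, hM]

theorem fromBlocks_mulVec_sumElim_zero {l m n o α : Type*} [Fintype l] [Fintype m]
    [NonUnitalNonAssocSemiring α] (P : Matrix n l α) (Q : Matrix n m α) (R : Matrix o l α)
    (S : Matrix o m α) (u : l → α) :
    fromBlocks P Q R S *ᵥ Sum.elim u 0 = Sum.elim (P *ᵥ u) (R *ᵥ u) := by
  rw [fromBlocks_mulVec]
  simp

theorem isUnit_det_fromBlocks_zero {m n R : Type*} [Fintype m] [Fintype n] [DecidableEq m]
    [DecidableEq n] [CommRing R] {P : Matrix m m R} {S : Matrix n n R} (hP : IsUnit P.det)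
    (hS : IsUnit S.det) : IsUnit (fromBlocks P 0 0 S).det := by
  rw [det_fromBlocks_zero₂₁]
  exact hP.mul hS

theorem hasEigenvector_inv_mul_one {ι R : Type*} [Fintype ι] [DecidableEq ι] [CommRing R]
    {M K : Matrix ι ι R} (hM : IsUnit M.det) {v : ι → R} (hKv : K *ᵥ v = M *ᵥ v)
    (hv : v ≠ 0) :
    Module.End.HasEigenvector (M⁻¹ * K).mulVecLin 1 v := by
  refine Module.End.hasEigenvector_iff.mpr ⟨?_, hv⟩
  rw [Module.End.mem_eigenspace_iff, mulVecLin_apply, ← mulVec_mulVec, hKv, mulVec_mulVec,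
    nonsing_inv_mul M hM, one_mulVec, one_smul]

end Matrix

theorem stmt_3_general (n m p : ℕ)
    (A : Matrix (Fin n) (Fin n) ℝ) (hA : A.PosDef)
    (B : Matrix (Fin m) (Fin n) ℝ) (hB : B.rank = m)
    (C : Matrix (Fin p) (Fin m) ℝ)
    (hatS₂ : Matrix (Fin p) (Fin p) ℝ) (hhatS₂ : hatS₂.PosDef)
    (S₁ : Matrix (Fin m) (Fin m) ℝ) (hS₁def : S₁ = B * A⁻¹ * Bᵀ)
    (K MD T : Matrix ((Fin n ⊕ Fin m) ⊕ Fin p) ((Fin n ⊕ Fin m) ⊕ Fin p) ℝ)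
    (hK : K = fromBlocks (fromBlocks A Bᵀ B 0) (fromRows 0 Cᵀ) (fromCols 0 C) 0)
    (hMD : MD = fromBlocks (fromBlocks A 0 0 S₁) 0 0 hatS₂)
    (hT : T = MD⁻¹ * K)
    (x : Fin n → ℝ) (hx : B *ᵥ x = 0) (hx0 : x ≠ 0) :
    Module.End.HasEigenvector T.mulVecLin 1
      (Sum.elim (Sum.elim x (0 : Fin m → ℝ)) (0 : Fin p → ℝ)) := by
  have hS₁ : S₁.PosDef := by
    have hBinj : Function.Injective B.vecMul :=
      vecMul_injective_of_rank_eq_card (by rw [hB, Fintype.card_fin])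
    simpa only [hS₁def, conjTranspose_eq_transpose_of_trivial] using
      hA.inv.mul_mul_conjTranspose_same hBinj
  have hMD_det : IsUnit MD.det := by
    rw [hMD]
    refine isUnit_det_fromBlocks_zero (isUnit_det_fromBlocks_zero ?_ ?_) ?_ <;>
      exact (isUnit_iff_isUnit_det _).mp (PosDef.isUnit ‹_›)
  have hKv : K *ᵥ Sum.elim (Sum.elim x 0) 0 = MD *ᵥ Sum.elim (Sum.elim x 0) 0 := by
    simp only [hK, hMD, fromBlocks_mulVec_sumElim_zero, fromCols_mulVec_sumElim, hx,
      zero_mulVec, mulVec_zero, add_zero]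
  have hv : Sum.elim (Sum.elim x (0 : Fin m → ℝ)) (0 : Fin p → ℝ) ≠ 0 := fun h =>
    hx0 (funext fun i => congrFun h (Sum.inl (Sum.inl i)))
  exact hT ▸ hasEigenvector_inv_mul_one hMD_det hKv hv

/-- Theorem 2.1, part 1, construction: with `A` SPD, `D = 0`, `B` of full
row rank `m`, `C` of full row rank `p`, `Ŝ₂` SPD, and `T = M̂_D⁻¹ K`: for every
`x ∈ ℝⁿ` with `Bx = 0` and `x ≠ 0`, the vector `(x, 0, 0)` is an eigenvector of `T`
with eigenvalue `1`. -/
theorem stmt_3 (n m p : ℕ) (hnm : m ≤ n) (hmp : p ≤ m)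
    (A : Matrix (Fin n) (Fin n) ℝ) (hA : A.PosDef)
    (B : Matrix (Fin m) (Fin n) ℝ) (hB : B.rank = m)
    (C : Matrix (Fin p) (Fin m) ℝ) (hC : C.rank = p)
    (hatS₂ : Matrix (Fin p) (Fin p) ℝ) (hhatS₂ : hatS₂.PosDef)
    (S₁ : Matrix (Fin m) (Fin m) ℝ) (hS₁def : S₁ = B * A⁻¹ * Bᵀ)
    (S₂ : Matrix (Fin p) (Fin p) ℝ) (hS₂def : S₂ = C * S₁⁻¹ * Cᵀ)
    (K MD T : Matrix ((Fin n ⊕ Fin m) ⊕ Fin p) ((Fin n ⊕ Fin m) ⊕ Fin p) ℝ)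
    (hK : K = fromBlocks (fromBlocks A Bᵀ B 0) (fromRows 0 Cᵀ) (fromCols 0 C) 0)
    (hMD : MD = fromBlocks (fromBlocks A 0 0 S₁) 0 0 hatS₂)
    (hT : T = MD⁻¹ * K)
    (x : Fin n → ℝ) (hx : B *ᵥ x = 0) (hx0 : x ≠ 0) :
    Module.End.HasEigenvector T.mulVecLin 1
      (Sum.elim (Sum.elim x (0 : Fin m → ℝ)) (0 : Fin p → ℝ)) :=
  stmt_3_general n m p A hA B hB C hatS₂ hhatS₂ S₁ hS₁def K MD T hK hMD hT x hx hx0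
end

section
/- (Theorem 2.1, part 1, characterization) Under the stated assumptions, the eigenspace of T = M̂_D⁻¹ K for the eigenvalue 1 equals {(x, 0, 0) : x ∈ ℝⁿ, Bx = 0}; that is, every eigenvector (x, y, z) of T with eigenvalue 1 satisfies y = 0, z = 0 and Bx = 0, and the geometric multiplicity of the eigenvalue 1 is n − m. -/
/-!
Since `M̂_D` is invertible, `T v = v` iff `K v = M̂_D v`. Blockwise, for `v = (x, y, z)`, this
reads `Bᵀ y = 0`, `B x + Cᵀ z = S₁ y`, `C y = Ŝ₂ z`: full row rank of `B` forces `y = 0`,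
then invertibility of `Ŝ₂` forces `z = 0`, leaving `B x = 0`. So the eigenspace is a copy of
`ker B`, of dimension `n - rank B = n - m`. Positive definiteness of `A`, hence of
`S₁ = B A⁻¹ Bᵀ`, is what makes `M̂_D` invertible.
-/

open Matrix

def inlInl (R ι κ τ : Type*) [Semiring R] : (ι → R) →ₗ[R] ((ι ⊕ κ) ⊕ τ → R) where
  toFun x := Sum.elim (Sum.elim x 0) 0
  map_add' x y := by ext ((i | i) | i) <;> simp
  map_smul' c x := by ext ((i | i) | i) <;> simp

theorem inlInl_injective (R ι κ τ : Type*) [Semiring R] :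
    Function.Injective (inlInl R ι κ τ) :=
  fun _ _ h => (Sum.elim_eq_iff.mp (Sum.elim_eq_iff.mp h).1).1

namespace Matrix

section Rank

variable {K : Type*} [Field K] {m n : Type*} [Fintype n]

theorem rank_add_finrank_ker_mulVecLin (M : Matrix m n K) :
    M.rank + Module.finrank K (LinearMap.ker M.mulVecLin) = Fintype.card n := by
  rw [rank, LinearMap.finrank_range_add_finrank_ker, Module.finrank_fintype_fun_eq_card]

theorem mulVec_injective_of_rank_eq_card_width {M : Matrix m n K}
    (hM : M.rank = Fintype.card n) : Function.Injective M.mulVec := by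
  have hker : LinearMap.ker M.mulVecLin = ⊥ :=
    Submodule.finrank_eq_zero.mp (by have := M.rank_add_finrank_ker_mulVecLin; omega)
  exact LinearMap.ker_eq_bot.mp hker

theorem vecMul_injective_of_rank_eq_card_height [Fintype m] {M : Matrix m n K}
    (hM : M.rank = Fintype.card m) : Function.Injective M.vecMul := by
  intro v w h
  apply mulVec_injective_of_rank_eq_card_width (M := Mᵀ) (by rwa [rank_transpose])
  simpa only [mulVec_transpose] using h

end Rank

theorem PosDef.mul_inv_mul_transpose {m n : Type*} [Fintype m] [Fintype n] [DecidableEq n]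
    {A : Matrix n n ℝ} (hA : A.PosDef) {B : Matrix m n ℝ} (hB : B.rank = Fintype.card m) :
    (B * A⁻¹ * Bᵀ).PosDef := by
  simpa only [conjTranspose_eq_transpose_of_trivial] using
    hA.inv.mul_mul_conjTranspose_same (vecMul_injective_of_rank_eq_card_height hB)

theorem mem_eigenspace_inv_mul_one_iff {R ι : Type*} [CommRing R] [Fintype ι] [DecidableEq ι]
    {M : Matrix ι ι R} (hM : IsUnit M.det) (N : Matrix ι ι R) (v : ι → R) :
    v ∈ Module.End.eigenspace (M⁻¹ * N).mulVecLin 1 ↔ N *ᵥ v = M *ᵥ v := by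
  have : Invertible M := M.invertibleOfIsUnitDet hM
  rw [Module.End.mem_eigenspace_iff, one_smul, mulVecLin_apply, ← mulVec_mulVec]
  refine ⟨fun h => ?_, inv_mulVec_eq_vec⟩
  calc N *ᵥ v = M *ᵥ (M⁻¹ *ᵥ (N *ᵥ v)) := by
        rw [mulVec_mulVec, mul_inv_of_invertible, one_mulVec]
    _ = M *ᵥ v := by rw [h]

section DoubleSaddlePoint

variable {R : Type*} {ι κ τ : Type*} [Fintype ι] [Fintype κ] [Fintype τ]

def doubleSaddlePoint [Zero R] (A : Matrix ι ι R) (B : Matrix κ ι R) (C : Matrix τ κ R) :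
    Matrix ((ι ⊕ κ) ⊕ τ) ((ι ⊕ κ) ⊕ τ) R :=
  fromBlocks (fromBlocks A Bᵀ B 0) (fromRows 0 Cᵀ) (fromCols 0 C) 0

def blockDiag3 [Zero R] (A : Matrix ι ι R) (S₁ : Matrix κ κ R) (S₂ : Matrix τ τ R) :
    Matrix ((ι ⊕ κ) ⊕ τ) ((ι ⊕ κ) ⊕ τ) R :=
  fromBlocks (fromBlocks A 0 0 S₁) 0 0 S₂

variable [CommRing R] (A : Matrix ι ι R)

theorem doubleSaddlePoint_mulVec_sumElim (B : Matrix κ ι R) (C : Matrix τ κ R)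
    (x : ι → R) (y : κ → R) (z : τ → R) :
    doubleSaddlePoint A B C *ᵥ Sum.elim (Sum.elim x y) z =
      Sum.elim (Sum.elim (A *ᵥ x + Bᵀ *ᵥ y) (B *ᵥ x + Cᵀ *ᵥ z)) (C *ᵥ y) := by
  simp only [doubleSaddlePoint, fromBlocks_mulVec, Sum.elim_comp_inl, Sum.elim_comp_inr,
    fromRows_mulVec, fromCols_mulVec_sumElim, zero_mulVec, add_zero, zero_add,
    ← Sum.elim_add_add]

theorem blockDiag3_mulVec_sumElim (S₁ : Matrix κ κ R) (S₂ : Matrix τ τ R)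
    (x : ι → R) (y : κ → R) (z : τ → R) :
    blockDiag3 A S₁ S₂ *ᵥ Sum.elim (Sum.elim x y) z =
      Sum.elim (Sum.elim (A *ᵥ x) (S₁ *ᵥ y)) (S₂ *ᵥ z) := by
  simp only [blockDiag3, fromBlocks_mulVec, Sum.elim_comp_inl, Sum.elim_comp_inr,
    zero_mulVec, add_zero, zero_add]

theorem doubleSaddlePoint_mulVec_eq_blockDiag3_mulVec_iff {B : Matrix κ ι R}
    (C : Matrix τ κ R) (S₁ : Matrix κ κ R) {S₂ : Matrix τ τ R}
    (hB : Function.Injective B.vecMul) (hS₂ : Function.Injective S₂.mulVec)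
    (v : (ι ⊕ κ) ⊕ τ → R) :
    doubleSaddlePoint A B C *ᵥ v = blockDiag3 A S₁ S₂ *ᵥ v ↔
      ∃ x : ι → R, B *ᵥ x = 0 ∧ v = Sum.elim (Sum.elim x 0) 0 := by
  obtain ⟨x, y, z, rfl⟩ : ∃ x y z, v = Sum.elim (Sum.elim x y) z :=
    ⟨_, _, _, funext fun | .inl (.inl _) | .inl (.inr _) | .inr _ => rfl⟩
  simp only [doubleSaddlePoint_mulVec_sumElim, blockDiag3_mulVec_sumElim, Sum.elim_eq_iff,
    add_eq_left, mulVec_transpose]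
  constructor
  · rintro ⟨⟨hy, hx⟩, hz⟩
    obtain rfl : y = 0 := hB (hy.trans (zero_vecMul B).symm)
    obtain rfl : z = 0 := hS₂ (by rw [← hz, mulVec_zero, mulVec_zero])
    exact ⟨x, by simpa only [mulVec_zero, zero_vecMul, add_zero] using hx, ⟨rfl, rfl⟩, rfl⟩
  · rintro ⟨x, hx, ⟨rfl, rfl⟩, rfl⟩
    simp only [zero_vecMul, mulVec_zero, hx, add_zero, and_self]

end DoubleSaddlePoint

end Matrix

theorem stmt_4_general (n m p : ℕ)
    (A : Matrix (Fin n) (Fin n) ℝ) (hA : A.PosDef)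
    (B : Matrix (Fin m) (Fin n) ℝ) (hB : B.rank = m)
    (C : Matrix (Fin p) (Fin m) ℝ)
    (hatS₂ : Matrix (Fin p) (Fin p) ℝ) (hhatS₂ : hatS₂.PosDef)
    (S₁ : Matrix (Fin m) (Fin m) ℝ) (hS₁def : S₁ = B * A⁻¹ * Bᵀ)
    (K MD T : Matrix ((Fin n ⊕ Fin m) ⊕ Fin p) ((Fin n ⊕ Fin m) ⊕ Fin p) ℝ)
    (hK : K = fromBlocks (fromBlocks A Bᵀ B 0) (fromRows 0 Cᵀ) (fromCols 0 C) 0)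
    (hMD : MD = fromBlocks (fromBlocks A 0 0 S₁) 0 0 hatS₂)
    (hT : T = MD⁻¹ * K) :
    (∀ v : (Fin n ⊕ Fin m) ⊕ Fin p → ℝ,
        v ∈ Module.End.eigenspace T.mulVecLin 1 ↔
          ∃ x : Fin n → ℝ, B *ᵥ x = 0 ∧
            v = Sum.elim (Sum.elim x (0 : Fin m → ℝ)) (0 : Fin p → ℝ)) ∧
      Module.finrank ℝ (Module.End.eigenspace T.mulVecLin 1) = n - m := by
  have hBinj : Function.Injective B.vecMul :=
    vecMul_injective_of_rank_eq_card_height (by rwa [Fintype.card_fin])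
  have hS₁ : S₁.PosDef := hS₁def ▸ hA.mul_inv_mul_transpose (by rwa [Fintype.card_fin])
  have hMD_det : IsUnit MD.det := by
    rw [hMD, det_fromBlocks_zero₂₁, det_fromBlocks_zero₂₁]
    exact (hA.det_pos.ne'.isUnit.mul hS₁.det_pos.ne'.isUnit).mul hhatS₂.det_pos.ne'.isUnit
  have hmem : ∀ v, v ∈ Module.End.eigenspace T.mulVecLin 1 ↔
      ∃ x : Fin n → ℝ, B *ᵥ x = 0 ∧ v = Sum.elim (Sum.elim x 0) 0 := fun v => by
    rw [hT, mem_eigenspace_inv_mul_one_iff hMD_det, hK, hMD]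
    exact doubleSaddlePoint_mulVec_eq_blockDiag3_mulVec_iff A C S₁ hBinj
      (mulVec_injective_of_isUnit hhatS₂.isUnit) v
  have heig : Module.End.eigenspace T.mulVecLin 1 =
      (LinearMap.ker B.mulVecLin).map (inlInl ℝ (Fin n) (Fin m) (Fin p)) := by
    ext v
    rw [hmem, Submodule.mem_map]
    simp only [LinearMap.mem_ker, mulVecLin_apply, eq_comm (a := v)]
    rfl
  refine ⟨hmem, ?_⟩
  rw [heig, ← (Submodule.equivMapOfInjective _ (inlInl_injective ..) _).finrank_eq]
  have hrank := B.rank_add_finrank_ker_mulVecLin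
  rw [hB, Fintype.card_fin] at hrank
  omega

/-- Theorem 2.1, part 1, characterization: the eigenspace of
`T = M̂_D⁻¹ K` for the eigenvalue `1` equals `{(x, 0, 0) : x ∈ ℝⁿ, Bx = 0}`; every
eigenvector `(x, y, z)` of `T` with eigenvalue `1` satisfies `y = 0`, `z = 0` and
`Bx = 0`, and the geometric multiplicity of the eigenvalue `1` is `n − m`. -/
theorem stmt_4 (n m p : ℕ) (hnm : m ≤ n) (hmp : p ≤ m)
    (A : Matrix (Fin n) (Fin n) ℝ) (hA : A.PosDef)
    (B : Matrix (Fin m) (Fin n) ℝ) (hB : B.rank = m)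
    (C : Matrix (Fin p) (Fin m) ℝ) (hC : C.rank = p)
    (hatS₂ : Matrix (Fin p) (Fin p) ℝ) (hhatS₂ : hatS₂.PosDef)
    (S₁ : Matrix (Fin m) (Fin m) ℝ) (hS₁def : S₁ = B * A⁻¹ * Bᵀ)
    (S₂ : Matrix (Fin p) (Fin p) ℝ) (hS₂def : S₂ = C * S₁⁻¹ * Cᵀ)
    (K MD T : Matrix ((Fin n ⊕ Fin m) ⊕ Fin p) ((Fin n ⊕ Fin m) ⊕ Fin p) ℝ)
    (hK : K = fromBlocks (fromBlocks A Bᵀ B 0) (fromRows 0 Cᵀ) (fromCols 0 C) 0)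
    (hMD : MD = fromBlocks (fromBlocks A 0 0 S₁) 0 0 hatS₂)
    (hT : T = MD⁻¹ * K) :
    (∀ v : (Fin n ⊕ Fin m) ⊕ Fin p → ℝ,
        v ∈ Module.End.eigenspace T.mulVecLin 1 ↔
          ∃ x : Fin n → ℝ, B *ᵥ x = 0 ∧
            v = Sum.elim (Sum.elim x (0 : Fin m → ℝ)) (0 : Fin p → ℝ)) ∧
      Module.finrank ℝ (Module.End.eigenspace T.mulVecLin 1) = n - m :=
  stmt_4_general n m p A hA B hB C hatS₂ hhatS₂ S₁ hS₁def K MD T hK hMD hT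
end

section
/- (Theorem 2.1, part 2, construction) Under the stated assumptions, let λ ∈ ℝ satisfy λ² = λ + 1 (i.e. λ = (1 ± √5)/2), let y ∈ ℝᵐ with Cy = 0 and y ≠ 0, and set x = (λ − 1)⁻¹ A⁻¹ Bᵀ y. Then (x, y, 0) is an eigenvector of T = M̂_D⁻¹ K with eigenvalue λ. -/
/-! Since `λ(λ - 1) = 1`, the vector `x` equals `λ A⁻¹ Bᵀ y`, so `A x = λ Bᵀ y` and `B x = λ S₁ y`.
Together with `λ² = λ + 1` and `C y = 0` this gives `K (x, y, 0) = λ M̂_D (x, y, 0)`, and `M̂_D` is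
invertible since `A`, `S₁` and `Ŝ₂` are positive definite (`S₁` because `B` has full row rank). -/

open Matrix

namespace Matrix

variable {l m n R : Type*} [Fintype l] [Fintype m] [Fintype n]

theorem linearIndependent_row_of_rank_eq_card [Field R] {B : Matrix m n R}
    (hB : B.rank = Fintype.card m) : LinearIndependent R B.row := by
  rw [linearIndependent_iff_card_eq_finrank_span, Set.finrank, ← rank_eq_finrank_span_row, hB]

theorem PosDef.mul_mul_transpose_of_rank_eq_card {A : Matrix n n ℝ} (hA : A.PosDef)
    {B : Matrix m n ℝ} (hB : B.rank = Fintype.card m) : (B * A * Bᵀ).PosDef := by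
  simpa using hA.mul_mul_conjTranspose_same
    (vecMul_injective_iff.mpr (linearIndependent_row_of_rank_eq_card hB))

theorem hasEigenvector_nonsing_inv_mul [Field R] [DecidableEq n] {M K : Matrix n n R}
    (hM : IsUnit M.det) {c : R} {v : n → R} (hKv : K *ᵥ v = c • (M *ᵥ v)) (hv : v ≠ 0) :
    Module.End.HasEigenvector (M⁻¹ * K).mulVecLin c v := by
  refine ⟨?_, hv⟩
  rw [Module.End.mem_eigenspace_iff, mulVecLin_apply, ← mulVec_mulVec, hKv, mulVec_smul,
    mulVec_mulVec, nonsing_inv_mul M hM, one_mulVec]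

theorem fromBlocks_fromBlocks_transpose_mulVec_sumElim [Semiring R]
    (A : Matrix n n R) (B : Matrix m n R) (C : Matrix l m R) (x : n → R) (y : m → R) (z : l → R) :
    fromBlocks (fromBlocks A Bᵀ B 0) (fromRows 0 Cᵀ) (fromCols 0 C) 0 *ᵥ Sum.elim (Sum.elim x y) z
      = Sum.elim (Sum.elim (A *ᵥ x + Bᵀ *ᵥ y) (B *ᵥ x + Cᵀ *ᵥ z)) (C *ᵥ y) := by
  ext ((i | i) | i) <;> simp [fromBlocks_mulVec]

theorem fromBlocks_fromBlocks_zero_mulVec_sumElim [Semiring R]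
    (A : Matrix n n R) (S : Matrix m m R) (H : Matrix l l R) (x : n → R) (y : m → R) (z : l → R) :
    fromBlocks (fromBlocks A 0 0 S) 0 0 H *ᵥ Sum.elim (Sum.elim x y) z
      = Sum.elim (Sum.elim (A *ᵥ x) (S *ᵥ y)) (H *ᵥ z) := by
  simp [fromBlocks_mulVec]

end Matrix

theorem inv_sub_one_eq_of_sq_eq_add_one {K : Type*} [Field K] {a : K} (ha : a ^ 2 = a + 1) :
    (a - 1)⁻¹ = a :=
  inv_eq_of_mul_eq_one_left (by linear_combination ha)

theorem stmt_6_general (n m p : ℕ)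
    (A : Matrix (Fin n) (Fin n) ℝ) (hA : A.PosDef)
    (B : Matrix (Fin m) (Fin n) ℝ) (hB : B.rank = m)
    (C : Matrix (Fin p) (Fin m) ℝ)
    (hatS₂ : Matrix (Fin p) (Fin p) ℝ) (hhatS₂ : hatS₂.PosDef)
    (S₁ : Matrix (Fin m) (Fin m) ℝ) (hS₁def : S₁ = B * A⁻¹ * Bᵀ)
    (K MD T : Matrix ((Fin n ⊕ Fin m) ⊕ Fin p) ((Fin n ⊕ Fin m) ⊕ Fin p) ℝ)
    (hK : K = fromBlocks (fromBlocks A Bᵀ B 0) (fromRows 0 Cᵀ) (fromCols 0 C) 0)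
    (hMD : MD = fromBlocks (fromBlocks A 0 0 S₁) 0 0 hatS₂)
    (hT : T = MD⁻¹ * K)
    (lam : ℝ) (hlam : lam ^ 2 = lam + 1)
    (y : Fin m → ℝ) (hy : C *ᵥ y = 0) (hy0 : y ≠ 0)
    (x : Fin n → ℝ) (hx : x = (lam - 1)⁻¹ • ((A⁻¹ * Bᵀ) *ᵥ y)) :
    Module.End.HasEigenvector T.mulVecLin lam
      (Sum.elim (Sum.elim x y) (0 : Fin p → ℝ)) := by
  have hS₁ : S₁.PosDef := hS₁def ▸ hA.inv.mul_mul_transpose_of_rank_eq_card (by simpa using hB)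
  have hMD_det : IsUnit MD.det := by
    rw [hMD, det_fromBlocks_zero₁₂, det_fromBlocks_zero₁₂]
    exact (mul_pos (mul_pos hA.det_pos hS₁.det_pos) hhatS₂.det_pos).ne'.isUnit
  rw [inv_sub_one_eq_of_sq_eq_add_one hlam] at hx
  have hAx : A *ᵥ x = lam • Bᵀ *ᵥ y := by
    rw [hx, mulVec_smul, mulVec_mulVec, mul_nonsing_inv_cancel_left _ _ hA.det_pos.ne'.isUnit]
  have hBx : B *ᵥ x = lam • S₁ *ᵥ y := by
    rw [hx, mulVec_smul, mulVec_mulVec, ← Matrix.mul_assoc, hS₁def]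
  subst hT
  refine hasEigenvector_nonsing_inv_mul hMD_det ?_ ?_
  · rw [hK, hMD, fromBlocks_fromBlocks_transpose_mulVec_sumElim,
      fromBlocks_fromBlocks_zero_mulVec_sumElim]
    ext ((i | i) | i)
    · simp only [Sum.elim_inl, Pi.add_apply, Pi.smul_apply, hAx, smul_eq_mul]
      linear_combination -(Bᵀ *ᵥ y) i * hlam
    · simp [hBx]
    · simp [hy]
  · exact fun h => hy0 (funext fun i => congrFun h (Sum.inl (Sum.inr i)))

/-- Theorem 2.1, part 2, construction: let `λ` satisfy `λ² = λ + 1`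
(i.e. `λ = (1 ± √5)/2`), let `y ≠ 0` with `Cy = 0`, and set
`x = (λ − 1)⁻¹ A⁻¹ Bᵀ y`. Then `(x, y, 0)` is an eigenvector of `T = M̂_D⁻¹ K`
with eigenvalue `λ`. -/
theorem stmt_6 (n m p : ℕ) (hnm : m ≤ n) (hmp : p ≤ m)
    (A : Matrix (Fin n) (Fin n) ℝ) (hA : A.PosDef)
    (B : Matrix (Fin m) (Fin n) ℝ) (hB : B.rank = m)
    (C : Matrix (Fin p) (Fin m) ℝ) (hC : C.rank = p)
    (hatS₂ : Matrix (Fin p) (Fin p) ℝ) (hhatS₂ : hatS₂.PosDef)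
    (S₁ : Matrix (Fin m) (Fin m) ℝ) (hS₁def : S₁ = B * A⁻¹ * Bᵀ)
    (S₂ : Matrix (Fin p) (Fin p) ℝ) (hS₂def : S₂ = C * S₁⁻¹ * Cᵀ)
    (K MD T : Matrix ((Fin n ⊕ Fin m) ⊕ Fin p) ((Fin n ⊕ Fin m) ⊕ Fin p) ℝ)
    (hK : K = fromBlocks (fromBlocks A Bᵀ B 0) (fromRows 0 Cᵀ) (fromCols 0 C) 0)
    (hMD : MD = fromBlocks (fromBlocks A 0 0 S₁) 0 0 hatS₂)
    (hT : T = MD⁻¹ * K)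
    (lam : ℝ) (hlam : lam ^ 2 = lam + 1)
    (y : Fin m → ℝ) (hy : C *ᵥ y = 0) (hy0 : y ≠ 0)
    (x : Fin n → ℝ) (hx : x = (lam - 1)⁻¹ • ((A⁻¹ * Bᵀ) *ᵥ y)) :
    Module.End.HasEigenvector T.mulVecLin lam
      (Sum.elim (Sum.elim x y) (0 : Fin p → ℝ)) :=
  stmt_6_general n m p A hA B hB C hatS₂ hhatS₂ S₁ hS₁def K MD T hK hMD hT lam hlam y hy hy0 x hx
end

section
/- (Theorem 2.1, part 2, multiplicity) Under the stated assumptions, each of the two golden-ratio values λ₊ = (1 + √5)/2 and λ₋ = (1 − √5)/2 is a root of the characteristic polynomial of T = M̂_D⁻¹ K of algebraic multiplicity exactly m − p. -/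
/-!
Away from `1` and the roots of `x² - x - 1`, `det (x • M̂_D - K)` is computed by two successive
Schur complements: eliminating the `A`-block leaves `q • S₁` with
`q = x - (x - 1)⁻¹ = (x² - x - 1) / (x - 1)`, and eliminating that block leaves
`x • Ŝ₂ - q⁻¹ • S₂`. Clearing denominators gives the polynomial identity
`charpoly T = (det Ŝ₂)⁻¹ (X - 1)^(n-m) (X² - X - 1)^(m-p) det ((X³ - X² - X) • Ŝ₂ - (X - 1) • S₂)`.
At a root `a` of `X² - X - 1` the last factor is `det (-(a - 1) • S₂) ≠ 0` because `S₂` is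
positive definite, so each golden-ratio value is a root of multiplicity exactly `m - p`.
-/

open Matrix Polynomial

theorem sub_one_ne_zero_of_sq_eq_add_one {R : Type*} [CommRing R] [Nontrivial R] {a : R}
    (ha : a ^ 2 = a + 1) : a - 1 ≠ 0 :=
  right_ne_zero_of_mul_eq_one (by linear_combination ha : a * (a - 1) = 1)

theorem Polynomial.X_sq_sub_X_sub_one_eq {R : Type*} [CommRing R] {a : R} (ha : a ^ 2 = a + 1) :
    (X ^ 2 - X - 1 : R[X]) = (X - C a) * (X - C (1 - a)) := by
  have hCa : C a ^ 2 = C a + 1 := by rw [← C_pow, ha, C_add, C_1]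
  rw [C_sub, C_1]
  linear_combination hCa

theorem Polynomial.rootMultiplicity_mul_X_sub_C_pow_of_eval_ne_zero {R : Type*} [CommRing R]
    {p : R[X]} {a : R} (hp : p.eval a ≠ 0) (k : ℕ) :
    (p * (X - C a) ^ k).rootMultiplicity a = k := by
  rw [rootMultiplicity_mul_X_sub_C_pow (by rintro rfl; simp at hp), rootMultiplicity_eq_zero hp,
    zero_add]

theorem Polynomial.rootMultiplicity_C_mul_X_sub_one_pow_mul_X_sq_sub_X_sub_one_pow_mul
    {K : Type*} [Field K] [CharZero K] {a c : K} (ha : a ^ 2 = a + 1) (hc : c ≠ 0) (k l : ℕ)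
    {G : K[X]} (hG : G.eval a ≠ 0) :
    (C c * ((X - 1) ^ k * (X ^ 2 - X - 1) ^ l * G)).rootMultiplicity a = l := by
  have ha₁ : a - 1 ≠ 0 := sub_one_ne_zero_of_sq_eq_add_one ha
  -- `(2a - 1)² = 5`: the two roots of `X² - X - 1` are distinct.
  have ha₂ : a - (1 - a) ≠ 0 := fun h => by
    have : (5 : K) = 0 := by linear_combination (2 * a - 1) * h - 4 * ha
    norm_num at this
  rw [X_sq_sub_X_sub_one_eq ha, mul_pow,
    show C c * ((X - 1) ^ k * ((X - C a) ^ l * (X - C (1 - a)) ^ l) * G) =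
      C c * (X - 1) ^ k * (X - C (1 - a)) ^ l * G * (X - C a) ^ l by ring]
  apply rootMultiplicity_mul_X_sub_C_pow_of_eval_ne_zero
  simp [hc, ha₁, ha₂, hG]

theorem Polynomial.eval_det_smul_map_sub_smul_map {R n : Type*} [CommRing R] [Fintype n]
    [DecidableEq n] (P Q : R[X]) (M N : Matrix n n R) (x : R) :
    (P • M.map C - Q • N.map C).det.eval x = (P.eval x • M - Q.eval x • N).det := by
  rw [← coe_evalRingHom, RingHom.map_det]
  congr 1
  ext i j
  simp

theorem eval_det_cubic_smul_map_sub_smul_map_ne_zero {K n : Type*} [Field K] [Fintype n]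
    [DecidableEq n] (Ŝ : Matrix n n K) {S : Matrix n n K} (hS : IsUnit S.det) {a : K}
    (ha : a ^ 2 = a + 1) :
    ((X ^ 3 - X ^ 2 - X : K[X]) • Ŝ.map C - (X - 1 : K[X]) • S.map C).det.eval a ≠ 0 := by
  have hcubic : a ^ 3 - a ^ 2 - a = 0 := by linear_combination a * ha
  simp [eval_det_smul_map_sub_smul_map, hcubic, det_neg, sub_one_ne_zero_of_sq_eq_add_one ha,
    hS.ne_zero]

theorem Matrix.eval_charpoly_inv_mul {K n : Type*} [Field K] [Fintype n] [DecidableEq n]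
    (M N : Matrix n n K) (hM : IsUnit M.det) (x : K) :
    (M⁻¹ * N).charpoly.eval x = M.det⁻¹ * (x • M - N).det := by
  have hscalar : scalar n x - M⁻¹ * N = M⁻¹ * (x • M - N) := by
    rw [Matrix.mul_sub, Matrix.mul_smul, nonsing_inv_mul _ hM, scalar_apply, smul_one_eq_diagonal]
  rw [eval_charpoly, hscalar, det_mul, det_nonsing_inv, Ring.inverse_eq_inv']

theorem Matrix.PosDef.mul_inv_mul_transpose_of_rank_eq {𝕜 m n : Type*} [Field 𝕜] [PartialOrder 𝕜]
    [StarRing 𝕜] [TrivialStar 𝕜] [Fintype m] [Fintype n] [DecidableEq n]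
    {A : Matrix n n 𝕜} (hA : A.PosDef) {B : Matrix m n 𝕜} (hB : B.rank = Fintype.card m) :
    (B * A⁻¹ * Bᵀ).PosDef := by
  simpa [conjTranspose_eq_transpose_of_trivial] using
    hA.inv.mul_mul_conjTranspose_same (vecMul_injective_iff.mpr <|
      linearIndependent_iff_card_eq_finrank_span.mpr <| hB.symm.trans B.rank_eq_finrank_span_row)

theorem Matrix.det_fromBlocks_fromBlocks_of_invertible {α l m o : Type*} [CommRing α]
    [Fintype l] [Fintype m] [Fintype o] [DecidableEq l] [DecidableEq m] [DecidableEq o]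
    (P : Matrix l l α) [Invertible P] (Q : Matrix l m α) (R : Matrix m l α) (S : Matrix m m α)
    (U : Matrix m o α) (V : Matrix o m α) (W : Matrix o o α) :
    (fromBlocks (fromBlocks P Q R S) (fromRows 0 U) (fromCols 0 V) W).det =
      P.det * (fromBlocks (S - R * ⅟P * Q) U V W).det := by
  have hreindex : reindex (Equiv.sumAssoc l m o) (Equiv.sumAssoc l m o)
      (fromBlocks (fromBlocks P Q R S) (fromRows 0 U) (fromCols 0 V) W) =
      fromBlocks P (fromCols Q 0) (fromRows R 0) (fromBlocks S U V W) := by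
    ext (i | i | i) (j | j | j) <;> rfl
  rw [← det_reindex_self (Equiv.sumAssoc l m o), hreindex, det_fromBlocks₁₁]
  congr 2
  ext (i | i) (j | j) <;> simp [fromRows_mul, mul_fromCols]

theorem det_smul_blockDiag_sub_saddlePoint {𝕜 l m o : Type*} [Field 𝕜] [Fintype l] [Fintype m]
    [Fintype o] [DecidableEq l] [DecidableEq m] [DecidableEq o] (A : Matrix l l 𝕜)
    (B : Matrix m l 𝕜) (C : Matrix o m 𝕜) (Ŝ : Matrix o o 𝕜) (S₁ : Matrix m m 𝕜)
    (S₂ : Matrix o o 𝕜) (hA : IsUnit A.det) (hS₁ : S₁ = B * A⁻¹ * Bᵀ) (hS₁det : IsUnit S₁.det)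
    (hS₂ : S₂ = C * S₁⁻¹ * Cᵀ) {x : 𝕜} (hx : x - 1 ≠ 0) (hq : x - (x - 1)⁻¹ ≠ 0) :
    (x • fromBlocks (fromBlocks A 0 0 S₁) 0 0 Ŝ -
        fromBlocks (fromBlocks A Bᵀ B 0) (fromRows 0 Cᵀ) (fromCols 0 C) 0).det =
      (x - 1) ^ Fintype.card l * A.det *
        ((x - (x - 1)⁻¹) ^ Fintype.card m * S₁.det * (x • Ŝ - (x - (x - 1)⁻¹)⁻¹ • S₂).det) := by
  set q := x - (x - 1)⁻¹
  have hblocks : x • fromBlocks (fromBlocks A 0 0 S₁) 0 0 Ŝ -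
      fromBlocks (fromBlocks A Bᵀ B 0) (fromRows 0 Cᵀ) (fromCols 0 C) 0 =
      fromBlocks (fromBlocks ((x - 1) • A) (-Bᵀ) (-B) (x • S₁)) (fromRows 0 (-Cᵀ))
        (fromCols 0 (-C)) (x • Ŝ) := by
    ext ((i | i) | i) ((j | j) | j) <;> simp [sub_smul]
  let : Invertible (x - 1) := invertibleOfNonzero hx
  let : Invertible q := invertibleOfNonzero hq
  let : Invertible ((x - 1) • A) :=
    invertibleOfIsUnitDet _ (by rw [det_smul]; exact (hx.isUnit.pow _).mul hA)
  let : Invertible (q • S₁) :=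
    invertibleOfIsUnitDet _ (by rw [det_smul]; exact (hq.isUnit.pow _).mul hS₁det)
  have hschur₁ : x • S₁ - -B * ⅟((x - 1) • A) * -Bᵀ = q • S₁ := by
    rw [invOf_eq_nonsing_inv, inv_smul _ _ hA, hS₁]
    simp [q, sub_smul]
  have hschur₂ : x • Ŝ - -C * ⅟(q • S₁) * -Cᵀ = x • Ŝ - q⁻¹ • S₂ := by
    rw [invOf_eq_nonsing_inv, inv_smul _ _ hS₁det, hS₂]
    simp
  rw [hblocks, det_fromBlocks_fromBlocks_of_invertible, hschur₁, det_fromBlocks₁₁, hschur₂,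
    det_smul, det_smul]

theorem charpoly_inv_blockDiag_mul_saddlePoint {n m p : ℕ} (hnm : m ≤ n) (hmp : p ≤ m)
    (A : Matrix (Fin n) (Fin n) ℝ) (hA : IsUnit A.det) (B : Matrix (Fin m) (Fin n) ℝ)
    (C : Matrix (Fin p) (Fin m) ℝ) (Ŝ₂ : Matrix (Fin p) (Fin p) ℝ) (hŜ₂ : IsUnit Ŝ₂.det)
    (S₁ : Matrix (Fin m) (Fin m) ℝ) (hS₁ : S₁ = B * A⁻¹ * Bᵀ) (hS₁det : IsUnit S₁.det)
    (S₂ : Matrix (Fin p) (Fin p) ℝ) (hS₂ : S₂ = C * S₁⁻¹ * Cᵀ) :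
    ((fromBlocks (fromBlocks A 0 0 S₁) 0 0 Ŝ₂)⁻¹ *
        fromBlocks (fromBlocks A Bᵀ B 0) (fromRows 0 Cᵀ) (fromCols 0 C) 0).charpoly =
      Polynomial.C Ŝ₂.det⁻¹ * ((X - 1 : ℝ[X]) ^ (n - m) * (X ^ 2 - X - 1 : ℝ[X]) ^ (m - p) *
        ((X ^ 3 - X ^ 2 - X : ℝ[X]) • Ŝ₂.map Polynomial.C -
          (X - 1 : ℝ[X]) • S₂.map Polynomial.C).det) := by
  have hMD : (fromBlocks (fromBlocks A 0 0 S₁) 0 0 Ŝ₂).det = A.det * S₁.det * Ŝ₂.det := by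
    rw [det_fromBlocks_zero₂₁, det_fromBlocks_zero₂₁]
  have hMDu : IsUnit (fromBlocks (fromBlocks A 0 0 S₁) 0 0 Ŝ₂).det := by
    rw [hMD]; exact (hA.mul hS₁det).mul hŜ₂
  apply eq_of_infinite_eval_eq
  refine (Set.Ioi_infinite 2).mono fun x (hx : 2 < x) => ?_
  have hx₁ : x - 1 ≠ 0 := by nlinarith
  have hx₂ : x ^ 2 - x - 1 ≠ 0 := by nlinarith
  have hq : x - (x - 1)⁻¹ = (x ^ 2 - x - 1) / (x - 1) := by field_simp
  have hresidual : x • Ŝ₂ - (x - (x - 1)⁻¹)⁻¹ • S₂ =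
      (x ^ 2 - x - 1)⁻¹ • ((x ^ 3 - x ^ 2 - x) • Ŝ₂ - (x - 1) • S₂) := by
    rw [hq, inv_div, smul_sub, smul_smul, smul_smul, ← div_eq_inv_mul, ← div_eq_inv_mul,
      show x ^ 3 - x ^ 2 - x = x * (x ^ 2 - x - 1) by ring, mul_div_cancel_right₀ _ hx₂]
  rw [Set.mem_ofPred_eq, eval_charpoly_inv_mul _ _ hMDu,
    det_smul_blockDiag_sub_saddlePoint A B C Ŝ₂ S₁ S₂ hA hS₁ hS₁det hS₂ hx₁
      (hq ▸ div_ne_zero hx₂ hx₁), hresidual, det_smul, hq, hMD]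
  simp only [eval_mul, eval_C, eval_pow, eval_sub, eval_X, eval_one,
    eval_det_smul_map_sub_smul_map, Fintype.card_fin, pow_sub₀ _ hx₁ hnm, pow_sub₀ _ hx₂ hmp,
    div_pow, inv_pow]
  have := hA.ne_zero
  have := hS₁det.ne_zero
  have := hŜ₂.ne_zero
  field_simp

/-- Theorem 2.1, part 2, multiplicity: each of the golden-ratio values
`λ₊ = (1 + √5)/2` and `λ₋ = (1 − √5)/2` is a root of the characteristic polynomial of
`T = M̂_D⁻¹ K` of algebraic multiplicity exactly `m − p`. -/
theorem stmt_7 (n m p : ℕ) (hnm : m ≤ n) (hmp : p ≤ m)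
    (A : Matrix (Fin n) (Fin n) ℝ) (hA : A.PosDef)
    (B : Matrix (Fin m) (Fin n) ℝ) (hB : B.rank = m)
    (C : Matrix (Fin p) (Fin m) ℝ) (hC : C.rank = p)
    (hatS₂ : Matrix (Fin p) (Fin p) ℝ) (hhatS₂ : hatS₂.PosDef)
    (S₁ : Matrix (Fin m) (Fin m) ℝ) (hS₁def : S₁ = B * A⁻¹ * Bᵀ)
    (S₂ : Matrix (Fin p) (Fin p) ℝ) (hS₂def : S₂ = C * S₁⁻¹ * Cᵀ)
    (K MD T : Matrix ((Fin n ⊕ Fin m) ⊕ Fin p) ((Fin n ⊕ Fin m) ⊕ Fin p) ℝ)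
    (hK : K = fromBlocks (fromBlocks A Bᵀ B 0) (fromRows 0 Cᵀ) (fromCols 0 C) 0)
    (hMD : MD = fromBlocks (fromBlocks A 0 0 S₁) 0 0 hatS₂)
    (hT : T = MD⁻¹ * K) :
    T.charpoly.rootMultiplicity ((1 + Real.sqrt 5) / 2) = m - p ∧
      T.charpoly.rootMultiplicity ((1 - Real.sqrt 5) / 2) = m - p := by
  have hS₁ : S₁.PosDef := hS₁def ▸ hA.mul_inv_mul_transpose_of_rank_eq (by simpa using hB)
  have hS₂ : S₂.PosDef := hS₂def ▸ hS₁.mul_inv_mul_transpose_of_rank_eq (by simpa using hC)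
  rw [hT, hMD, hK, charpoly_inv_blockDiag_mul_saddlePoint hnm hmp A hA.det_pos.ne'.isUnit B C
    hatS₂ hhatS₂.det_pos.ne'.isUnit S₁ hS₁def hS₁.det_pos.ne'.isUnit S₂ hS₂def]
  have hc : hatS₂.det⁻¹ ≠ 0 := inv_ne_zero hhatS₂.det_pos.ne'
  have hS₂u : IsUnit S₂.det := hS₂.det_pos.ne'.isUnit
  exact ⟨rootMultiplicity_C_mul_X_sub_one_pow_mul_X_sq_sub_X_sub_one_pow_mul
      Real.goldenRatio_sq hc _ _
      (eval_det_cubic_smul_map_sub_smul_map_ne_zero hatS₂ hS₂u Real.goldenRatio_sq),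
    rootMultiplicity_C_mul_X_sub_one_pow_mul_X_sq_sub_X_sub_one_pow_mul
      Real.goldenConj_sq hc _ _
      (eval_det_cubic_smul_map_sub_smul_map_ne_zero hatS₂ hS₂u Real.goldenConj_sq)⟩
end

section
/- (Theorem 2.1, part 3) Under the stated assumptions, suppose λ ∈ ℝ is an eigenvalue of T = M̂_D⁻¹ K with eigenvector (x, y, z), and suppose λ ≠ 1 and λ² ≠ λ + 1. Then z ≠ 0 and S₂ z = μ Ŝ₂ z, where μ = λ(λ² − λ − 1)/(λ − 1); equivalently, λ is a root of the cubic λ³ − λ² − (1 + μ)λ + μ = 0 for some generalized eigenvalue μ of the pencil (S₂, Ŝ₂). -/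
/-!
The first block row gives `Bᵀ y = (λ - 1) A x`, so `x = (λ - 1)⁻¹ A⁻¹ Bᵀ y` and
`B x = (λ - 1)⁻¹ S₁ y`. Substituting into the second row leaves `Cᵀ z = c S₁ y` with
`c = λ - (λ - 1)⁻¹ = (λ² - λ - 1)/(λ - 1) ≠ 0`, hence `y = c⁻¹ S₁⁻¹ Cᵀ z` and `C y = c⁻¹ S₂ z`;
the third row `C y = λ Ŝ₂ z` then reads `S₂ z = c λ Ŝ₂ z`. If `z = 0`, the same two
eliminations force `y = 0` and `x = 0`. The cubic is `λ(λ² - λ - 1) - μ(λ - 1) = 0`.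
-/

open Matrix

namespace Matrix

variable {ι κ τ K : Type*} [Fintype ι] [Fintype κ] [Fintype τ]

theorem vecMul_injective_of_rank_eq_card_s8 [Field K] {B : Matrix κ ι K}
    (hB : B.rank = Fintype.card κ) : Function.Injective B.vecMul := by
  rw [vecMul_injective_iff, linearIndependent_iff_card_eq_finrank_span, Set.finrank,
    ← rank_eq_finrank_span_row, hB]

theorem PosDef.mul_inv_mul_transpose_of_rank_eq_card [DecidableEq ι] {A : Matrix ι ι ℝ}
    (hA : A.PosDef) {B : Matrix κ ι ℝ} (hB : B.rank = Fintype.card κ) :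
    (B * A⁻¹ * Bᵀ).PosDef := by
  simpa using hA.inv.mul_mul_conjTranspose_same (vecMul_injective_of_rank_eq_card_s8 hB)

section Field

variable [Field K] [DecidableEq ι]

theorem eq_inv_smul_inv_mulVec_of_eq_smul_mulVec {A : Matrix ι ι K} (hA : IsUnit A.det)
    {c : K} (hc : c ≠ 0) {x w : ι → K} (h : w = c • (A *ᵥ x)) :
    x = c⁻¹ • (A⁻¹ *ᵥ w) := by
  rw [h, mulVec_smul, mulVec_mulVec, nonsing_inv_mul _ hA, one_mulVec, smul_smul,
    inv_mul_cancel₀ hc, one_smul]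

theorem mulVec_eq_inv_smul_of_transpose_mulVec_eq_smul {A : Matrix ι ι K} (hA : IsUnit A.det)
    {B : Matrix κ ι K} {c : K} (hc : c ≠ 0) {x : ι → K} {y : κ → K}
    (h : Bᵀ *ᵥ y = c • (A *ᵥ x)) : B *ᵥ x = c⁻¹ • ((B * A⁻¹ * Bᵀ) *ᵥ y) := by
  rw [eq_inv_smul_inv_mulVec_of_eq_smul_mulVec (w := Bᵀ *ᵥ y) hA hc h, mulVec_smul,
    mulVec_mulVec, mulVec_mulVec]

theorem mulVec_eq_smul_mulVec_of_inv_mul_mulVec_eq_smul {M N : Matrix ι ι K}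
    (hM : IsUnit M.det) {v : ι → K} {lam : K} (h : (M⁻¹ * N) *ᵥ v = lam • v) :
    N *ᵥ v = lam • (M *ᵥ v) := by
  rw [← mulVec_smul, ← h, mulVec_mulVec, ← Matrix.mul_assoc, mul_nonsing_inv _ hM,
    Matrix.one_mul]

end Field

section Blocks

variable [Semiring K] (x : ι → K) (y : κ → K) (z : τ → K)

theorem fromBlocks_saddlePoint_mulVec (A : Matrix ι ι K) (B : Matrix κ ι K) (C : Matrix τ κ K) :
    fromBlocks (fromBlocks A Bᵀ B 0) (fromRows 0 Cᵀ) (fromCols 0 C) 0 *ᵥ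
        Sum.elim (Sum.elim x y) z =
      Sum.elim (Sum.elim (A *ᵥ x + Bᵀ *ᵥ y) (B *ᵥ x + Cᵀ *ᵥ z)) (C *ᵥ y) := by
  ext ((i | i) | i) <;> simp [fromBlocks_mulVec]

theorem fromBlocks_blockDiagonal_mulVec (A : Matrix ι ι K) (S : Matrix κ κ K)
    (R : Matrix τ τ K) :
    fromBlocks (fromBlocks A 0 0 S) 0 0 R *ᵥ Sum.elim (Sum.elim x y) z =
      Sum.elim (Sum.elim (A *ᵥ x) (S *ᵥ y)) (R *ᵥ z) := by
  ext ((i | i) | i) <;> simp [fromBlocks_mulVec]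

end Blocks

theorem saddlePoint_eigen_equations [Field K] [DecidableEq ι] [DecidableEq κ] [DecidableEq τ]
    {A : Matrix ι ι K} {S : Matrix κ κ K} {R : Matrix τ τ K} {B : Matrix κ ι K}
    {C : Matrix τ κ K} (hM : IsUnit (fromBlocks (fromBlocks A 0 0 S) 0 0 R).det)
    {x : ι → K} {y : κ → K} {z : τ → K} {lam : K}
    (h : ((fromBlocks (fromBlocks A 0 0 S) 0 0 R)⁻¹ *
        fromBlocks (fromBlocks A Bᵀ B 0) (fromRows 0 Cᵀ) (fromCols 0 C) 0) *ᵥ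
          Sum.elim (Sum.elim x y) z = lam • Sum.elim (Sum.elim x y) z) :
    A *ᵥ x + Bᵀ *ᵥ y = lam • (A *ᵥ x) ∧ B *ᵥ x + Cᵀ *ᵥ z = lam • (S *ᵥ y) ∧
      C *ᵥ y = lam • (R *ᵥ z) := by
  have h' := congrFun (mulVec_eq_smul_mulVec_of_inv_mul_mulVec_eq_smul hM h)
  simp only [fromBlocks_saddlePoint_mulVec, fromBlocks_blockDiagonal_mulVec] at h'
  exact ⟨funext fun i ↦ by simpa using h' (.inl (.inl i)),
    funext fun i ↦ by simpa using h' (.inl (.inr i)), funext fun i ↦ by simpa using h' (.inr i)⟩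

end Matrix

theorem stmt_8_general (n m p : ℕ)
    (A : Matrix (Fin n) (Fin n) ℝ) (hA : A.PosDef)
    (B : Matrix (Fin m) (Fin n) ℝ) (hB : B.rank = m)
    (C : Matrix (Fin p) (Fin m) ℝ)
    (hatS₂ : Matrix (Fin p) (Fin p) ℝ) (hhatS₂ : hatS₂.PosDef)
    (S₁ : Matrix (Fin m) (Fin m) ℝ) (hS₁def : S₁ = B * A⁻¹ * Bᵀ)
    (S₂ : Matrix (Fin p) (Fin p) ℝ) (hS₂def : S₂ = C * S₁⁻¹ * Cᵀ)
    (K MD T : Matrix ((Fin n ⊕ Fin m) ⊕ Fin p) ((Fin n ⊕ Fin m) ⊕ Fin p) ℝ)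
    (hK : K = fromBlocks (fromBlocks A Bᵀ B 0) (fromRows 0 Cᵀ) (fromCols 0 C) 0)
    (hMD : MD = fromBlocks (fromBlocks A 0 0 S₁) 0 0 hatS₂)
    (hT : T = MD⁻¹ * K)
    (lam : ℝ) (hlam1 : lam ≠ 1) (hlam2 : lam ^ 2 ≠ lam + 1)
    (x : Fin n → ℝ) (y : Fin m → ℝ) (z : Fin p → ℝ)
    (hv0 : Sum.elim (Sum.elim x y) z ≠ 0)
    (heig : T *ᵥ Sum.elim (Sum.elim x y) z = lam • Sum.elim (Sum.elim x y) z) :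
    z ≠ 0 ∧
      S₂ *ᵥ z = (lam * (lam ^ 2 - lam - 1) / (lam - 1)) • (hatS₂ *ᵥ z) ∧
      lam ^ 3 - lam ^ 2 - (1 + lam * (lam ^ 2 - lam - 1) / (lam - 1)) * lam +
          lam * (lam ^ 2 - lam - 1) / (lam - 1) = 0 := by
  subst hK hMD hT
  have hS₁ : S₁.PosDef := hS₁def ▸ hA.mul_inv_mul_transpose_of_rank_eq_card (by simpa using hB)
  have hAu : IsUnit A.det := hA.det_pos.ne'.isUnit
  have hS₁u : IsUnit S₁.det := hS₁.det_pos.ne'.isUnit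
  have hMD : IsUnit (fromBlocks (fromBlocks A 0 0 S₁) 0 0 hatS₂).det := by
    simp only [det_fromBlocks_zero₂₁]
    exact (mul_pos (mul_pos hA.det_pos hS₁.det_pos) hhatS₂.det_pos).ne'.isUnit
  obtain ⟨e₁, e₂, e₃⟩ := saddlePoint_eigen_equations hMD heig
  have hlam1' : lam - 1 ≠ 0 := sub_ne_zero.mpr hlam1
  set c := (lam ^ 2 - lam - 1) / (lam - 1) with hc_def
  have hc : c ≠ 0 := div_ne_zero (fun h ↦ hlam2 (by linarith)) hlam1'
  have hBy : Bᵀ *ᵥ y = (lam - 1) • (A *ᵥ x) := by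
    rw [sub_smul, one_smul, ← e₁, add_sub_cancel_left]
  have hCz : Cᵀ *ᵥ z = c • (S₁ *ᵥ y) := by
    rw [show c = lam - (lam - 1)⁻¹ by rw [hc_def]; field_simp, sub_smul, ← e₂, hS₁def,
      ← mulVec_eq_inv_smul_of_transpose_mulVec_eq_smul hAu hlam1' hBy, add_sub_cancel_left]
  have hS₂z : S₂ *ᵥ z = (c * lam) • (hatS₂ *ᵥ z) := by
    rw [hS₂def, mul_smul, ← e₃, mulVec_eq_inv_smul_of_transpose_mulVec_eq_smul hS₁u hc hCz,
      smul_smul, mul_inv_cancel₀ hc, one_smul]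
  have hz : z ≠ 0 := by
    rintro rfl
    obtain rfl : y = 0 := by simpa using eq_inv_smul_inv_mulVec_of_eq_smul_mulVec hS₁u hc hCz
    obtain rfl : x = 0 := by simpa using eq_inv_smul_inv_mulVec_of_eq_smul_mulVec hAu hlam1' hBy
    exact hv0 (by simp)
  have hμ : c * lam = lam * (lam ^ 2 - lam - 1) / (lam - 1) := by ring
  refine ⟨hz, hμ ▸ hS₂z, ?_⟩
  field_simp
  ring

/-- Theorem 2.1, part 3: suppose `λ` is an eigenvalue of `T = M̂_D⁻¹ K`
with eigenvector `(x, y, z)`, and suppose `λ ≠ 1` and `λ² ≠ λ + 1`. Then `z ≠ 0` and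
`S₂ z = μ Ŝ₂ z` where `μ = λ(λ² − λ − 1)/(λ − 1)`; equivalently, `λ` is a root of the
cubic `λ³ − λ² − (1 + μ)λ + μ = 0` for a generalized eigenvalue `μ` of the pencil
`(S₂, Ŝ₂)`. -/
theorem stmt_8 (n m p : ℕ) (hnm : m ≤ n) (hmp : p ≤ m)
    (A : Matrix (Fin n) (Fin n) ℝ) (hA : A.PosDef)
    (B : Matrix (Fin m) (Fin n) ℝ) (hB : B.rank = m)
    (C : Matrix (Fin p) (Fin m) ℝ) (hC : C.rank = p)
    (hatS₂ : Matrix (Fin p) (Fin p) ℝ) (hhatS₂ : hatS₂.PosDef)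
    (S₁ : Matrix (Fin m) (Fin m) ℝ) (hS₁def : S₁ = B * A⁻¹ * Bᵀ)
    (S₂ : Matrix (Fin p) (Fin p) ℝ) (hS₂def : S₂ = C * S₁⁻¹ * Cᵀ)
    (K MD T : Matrix ((Fin n ⊕ Fin m) ⊕ Fin p) ((Fin n ⊕ Fin m) ⊕ Fin p) ℝ)
    (hK : K = fromBlocks (fromBlocks A Bᵀ B 0) (fromRows 0 Cᵀ) (fromCols 0 C) 0)
    (hMD : MD = fromBlocks (fromBlocks A 0 0 S₁) 0 0 hatS₂)
    (hT : T = MD⁻¹ * K)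
    (lam : ℝ) (hlam1 : lam ≠ 1) (hlam2 : lam ^ 2 ≠ lam + 1)
    (x : Fin n → ℝ) (y : Fin m → ℝ) (z : Fin p → ℝ)
    (hv0 : Sum.elim (Sum.elim x y) z ≠ 0)
    (heig : T *ᵥ Sum.elim (Sum.elim x y) z = lam • Sum.elim (Sum.elim x y) z) :
    z ≠ 0 ∧
      S₂ *ᵥ z = (lam * (lam ^ 2 - lam - 1) / (lam - 1)) • (hatS₂ *ᵥ z) ∧
      lam ^ 3 - lam ^ 2 - (1 + lam * (lam ^ 2 - lam - 1) / (lam - 1)) * lam +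
          lam * (lam ^ 2 - lam - 1) / (lam - 1) = 0 :=
  stmt_8_general n m p A hA B hB C hatS₂ hhatS₂ S₁ hS₁def S₂ hS₂def K MD T hK hMD hT lam hlam1 hlam2
    x y z hv0 heig
end

section
/- Let I ⊆ ℝ be an open interval and let λ : I → ℝ be differentiable with λ(μ)³ − λ(μ)² − (1 + μ)λ(μ) + μ = 0 for all μ ∈ I, and λ(μ) ≠ 1 on I. Then at any μ₀ ∈ I: if λ(μ₀) > 0 then λ'(μ₀) > 0, and if λ(μ₀) < −1 then λ'(μ₀) < 0; that is, positive root branches are increasing in μ and root branches below −1 are decreasing in μ. -/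
/-!
Differentiating the root identity implicitly gives `(3λ² − 2λ − (1 + μ)) λ' = λ − 1`.
Multiplying by `λ − 1` and eliminating `μ` with the root identity turns this into
`(2λ(λ − 1)² + 1) λ' = (λ − 1)²`, whose right side is positive as `λ ≠ 1`; the factor
`2λ(λ − 1)² + 1` is positive for `λ > 0` and negative for `λ < −1`.
-/

open Filter Topology

theorem cubic_root_branch_implicit_deriv {f : ℝ → ℝ} {c μ : ℝ} (hf : HasDerivAt f c μ)
    (hroot : ∀ᶠ t in 𝓝 μ, f t ^ 3 - f t ^ 2 - (1 + t) * f t + t = 0) :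
    (3 * f μ ^ 2 - 2 * f μ - (1 + μ)) * c = f μ - 1 := by
  have hchain : HasDerivAt (fun t => f t ^ 3 - f t ^ 2 - (1 + t) * f t + t)
      (3 * f μ ^ 2 * c - 2 * f μ * c - (1 * f μ + (1 + μ) * c) + 1) μ := by
    have hcube := hf.fun_pow 3
    have hsquare := hf.fun_pow 2
    simp only [Nat.add_one_sub_one, pow_one, Nat.cast_ofNat] at hcube hsquare
    have hlin : HasDerivAt (fun t : ℝ => 1 + t) 1 μ := (hasDerivAt_id μ).const_add 1
    exact ((hcube.sub hsquare).sub (hlin.mul hf)).add (hasDerivAt_id μ)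
  have hzero := (hasDerivAt_const μ (0 : ℝ)).congr_of_eventuallyEq hroot
  linear_combination hchain.unique hzero

theorem cubic_root_branch_deriv_mul_eq {x μ c : ℝ}
    (hroot : x ^ 3 - x ^ 2 - (1 + μ) * x + μ = 0)
    (hderiv : (3 * x ^ 2 - 2 * x - (1 + μ)) * c = x - 1) :
    (2 * x * (x - 1) ^ 2 + 1) * c = (x - 1) ^ 2 := by
  linear_combination (x - 1) * hderiv - c * hroot

theorem two_mul_mul_sub_one_sq_add_one_pos {x : ℝ} (hx : 0 < x) :
    0 < 2 * x * (x - 1) ^ 2 + 1 := by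
  positivity

theorem two_mul_mul_sub_one_sq_add_one_neg {x : ℝ} (hx : x < -1) :
    2 * x * (x - 1) ^ 2 + 1 < 0 := by
  nlinarith [mul_le_mul_of_nonneg_left (by nlinarith : (4 : ℝ) ≤ (x - 1) ^ 2)
    (by linarith : (0 : ℝ) ≤ -x)]

/-- let `I = (a, b)` be an open interval and `λ : I → ℝ` a differentiable
branch of roots of `λ³ − λ² − (1 + μ)λ + μ = 0` with `λ(μ) ≠ 1` on `I`. Then at any
`μ₀ ∈ I`: if `λ(μ₀) > 0` then `λ'(μ₀) > 0`, and if `λ(μ₀) < −1` then `λ'(μ₀) < 0`. -/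
theorem stmt_11 (a b : ℝ) (f : ℝ → ℝ)
    (hdiff : ∀ μ ∈ Set.Ioo a b, DifferentiableAt ℝ f μ)
    (hroot : ∀ μ ∈ Set.Ioo a b, (f μ) ^ 3 - (f μ) ^ 2 - (1 + μ) * f μ + μ = 0)
    (hne : ∀ μ ∈ Set.Ioo a b, f μ ≠ 1)
    (μ₀ : ℝ) (hμ₀ : μ₀ ∈ Set.Ioo a b) :
    (0 < f μ₀ → 0 < deriv f μ₀) ∧ (f μ₀ < -1 → deriv f μ₀ < 0) := by
  have hroot_near : ∀ᶠ t in 𝓝 μ₀, f t ^ 3 - f t ^ 2 - (1 + t) * f t + t = 0 :=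
    eventually_of_mem (isOpen_Ioo.mem_nhds hμ₀) hroot
  have hkey := cubic_root_branch_deriv_mul_eq (hroot μ₀ hμ₀)
    (cubic_root_branch_implicit_deriv (hdiff μ₀ hμ₀).hasDerivAt hroot_near)
  have hsq : 0 < (f μ₀ - 1) ^ 2 := sq_pos_of_ne_zero (sub_ne_zero.mpr (hne μ₀ hμ₀))
  rw [← hkey] at hsq
  exact ⟨fun hpos => pos_of_mul_pos_right hsq (two_mul_mul_sub_one_sq_add_one_pos hpos).le,
    fun hneg => neg_of_mul_pos_right hsq (two_mul_mul_sub_one_sq_add_one_neg hneg).le⟩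
end

section
/- For every real μ > 0 the cubic polynomial p_μ(λ) = λ³ − λ² − (1 + μ)λ + μ has three distinct real roots λ₃ < λ₂ < λ₁ with λ₃ < 0, 0 < λ₂ < 1, and λ₁ > 1. Moreover, if μ ≥ 1 then λ₃ ≤ 2cos(5π/7), 2cos(3π/7) ≤ λ₂ < 1, and λ₁ ≥ 2cos(π/7). -/
/-!
Write `saddleCubic μ` for `p_μ`. The intermediate value theorem on the sign pattern
`p_μ(-(μ+2)) < 0 < p_μ(0)`, `p_μ(1) < 0 < p_μ(μ+2)` gives three roots, hence all of them.
For the bounds, `p_μ(x) = p_1(x) + (μ - 1)(1 - x)`, and `2cos(kπ/7)` (`k = 1, 3, 5`) are the roots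
of `p_1`: for `θ = kπ/7` with `k` odd, `cos 4θ = -cos 3θ`, while
`cos 4θ + cos 3θ = (cos θ + 1) p_1(2cos θ)`. When `μ ≥ 1` the sign of
`p_μ(x) = (x - λ₁)(x - λ₂)(x - λ₃)` at these three points puts each `λᵢ` on the required side.
-/

open Real

def saddleCubic (μ x : ℝ) : ℝ := x ^ 3 - x ^ 2 - (1 + μ) * x + μ

theorem cubic_eq_mul_sub_of_roots {K : Type*} [Field K] {a b c r s t : K}
    (hrs : r ≠ s) (hrt : r ≠ t) (hst : s ≠ t) (hr : r ^ 3 + a * r ^ 2 + b * r + c = 0)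
    (hs : s ^ 3 + a * s ^ 2 + b * s + c = 0) (ht : t ^ 3 + a * t ^ 2 + b * t + c = 0) (x : K) :
    x ^ 3 + a * x ^ 2 + b * x + c = (x - r) * (x - s) * (x - t) := by
  have hrs' : r ^ 2 + r * s + s ^ 2 + a * (r + s) + b = 0 :=
    mul_left_cancel₀ (sub_ne_zero.2 hrs) (by linear_combination hr - hs)
  have hrt' : r ^ 2 + r * t + t ^ 2 + a * (r + t) + b = 0 :=
    mul_left_cancel₀ (sub_ne_zero.2 hrt) (by linear_combination hr - ht)
  have hsum : r + s + t = -a :=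
    mul_left_cancel₀ (sub_ne_zero.2 hst) (by linear_combination hrs' - hrt')
  linear_combination (x ^ 2 - r ^ 2 - (x - r) * (r + s)) * hsum + (x - r) * hrs' + hr

namespace saddleCubic

theorem eq_monic (μ x : ℝ) : saddleCubic μ x = x ^ 3 + (-1) * x ^ 2 + -(1 + μ) * x + μ := by
  unfold saddleCubic; ring

theorem eq_one_add (μ x : ℝ) : saddleCubic μ x = saddleCubic 1 x + (μ - 1) * (1 - x) := by
  unfold saddleCubic; ring

theorem exists_roots_eq_mul_sub {μ : ℝ} (hμ : 0 < μ) :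
    ∃ l₁ l₂ l₃ : ℝ, l₃ < 0 ∧ 0 < l₂ ∧ l₂ < 1 ∧ 1 < l₁ ∧
      ∀ x, saddleCubic μ x = (x - l₁) * (x - l₂) * (x - l₃) := by
  have hcont : Continuous (saddleCubic μ) := by
    unfold saddleCubic; fun_prop
  have h_left : saddleCubic μ (-(μ + 2)) < 0 := by unfold saddleCubic; nlinarith
  have h_zero : saddleCubic μ 0 = μ := by unfold saddleCubic; ring
  have h_one : saddleCubic μ 1 = -1 := by unfold saddleCubic; ring
  have h_right : 0 < saddleCubic μ (μ + 2) := by unfold saddleCubic; nlinarith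
  obtain ⟨l₃, ⟨-, hl₃⟩, r₃⟩ := intermediate_value_Ioo (by linarith : -(μ + 2) ≤ 0)
    hcont.continuousOn (show (0 : ℝ) ∈ Set.Ioo _ _ by constructor <;> linarith)
  obtain ⟨l₂, ⟨hl₂₀, hl₂₁⟩, r₂⟩ := intermediate_value_Ioo' zero_le_one
    hcont.continuousOn (show (0 : ℝ) ∈ Set.Ioo _ _ by constructor <;> linarith)
  obtain ⟨l₁, ⟨hl₁, -⟩, r₁⟩ := intermediate_value_Ioo (by linarith : 1 ≤ μ + 2)
    hcont.continuousOn (show (0 : ℝ) ∈ Set.Ioo _ _ by constructor <;> linarith)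
  refine ⟨l₁, l₂, l₃, hl₃, hl₂₀, hl₂₁, hl₁, fun x => ?_⟩
  rw [eq_monic] at r₁ r₂ r₃ ⊢
  exact cubic_eq_mul_sub_of_roots (by linarith) (by linarith) (by linarith) r₁ r₂ r₃ x

theorem one_two_cos_eq_zero_of_cos_four_mul {θ : ℝ} (h : cos (4 * θ) = -cos (3 * θ))
    (hθ : cos θ ≠ -1) :
    saddleCubic 1 (2 * cos θ) = 0 := by
  have h4 : cos (4 * θ) = 2 * (2 * cos θ ^ 2 - 1) ^ 2 - 1 := by
    rw [show 4 * θ = 2 * (2 * θ) by ring, cos_two_mul, cos_two_mul]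
  have hfac : (cos θ + 1) * saddleCubic 1 (2 * cos θ) = 0 := by
    unfold saddleCubic
    rw [cos_three_mul, h4] at h
    linear_combination h
  exact (mul_eq_zero.mp hfac).resolve_left fun h0 => hθ (eq_neg_of_add_eq_zero_left h0)

theorem one_two_cos_odd_mul_pi_div_seven {k : ℕ} (hk : Odd k) (hk7 : k < 7) :
    saddleCubic 1 (2 * cos (k * π / 7)) = 0 := by
  apply one_two_cos_eq_zero_of_cos_four_mul
  · rw [show 4 * (k * π / 7) = k * π - 3 * (k * π / 7) by ring, cos_nat_mul_pi_sub,
      hk.neg_one_pow, neg_one_mul]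
  · have hlt : k * π / 7 < π := by
      have : (k : ℝ) < 7 := by exact_mod_cast hk7
      nlinarith [pi_pos]
    have := cos_lt_cos_of_nonneg_of_le_pi (by positivity) le_rfl hlt
    rw [cos_pi] at this
    exact this.ne'

section

variable {μ l₁ l₂ l₃ x : ℝ}

theorem smallest_root_le_of_nonneg (hfac : ∀ x, saddleCubic μ x = (x - l₁) * (x - l₂) * (x - l₃))
    (hx : 0 ≤ saddleCubic μ x) (h₁ : x < l₁) (h₂ : x < l₂) : l₃ ≤ x := by
  rw [hfac] at hx
  nlinarith [mul_pos (sub_pos.2 h₁) (sub_pos.2 h₂)]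

theorem le_middle_root_of_nonneg (hfac : ∀ x, saddleCubic μ x = (x - l₁) * (x - l₂) * (x - l₃))
    (hx : 0 ≤ saddleCubic μ x) (h₁ : x < l₁) (h₃ : l₃ < x) : x ≤ l₂ := by
  rw [hfac] at hx
  nlinarith [mul_pos (sub_pos.2 h₁) (sub_pos.2 h₃)]

theorem le_largest_root_of_nonpos (hfac : ∀ x, saddleCubic μ x = (x - l₁) * (x - l₂) * (x - l₃))
    (hx : saddleCubic μ x ≤ 0) (h₂ : l₂ < x) (h₃ : l₃ < x) : x ≤ l₁ := by
  rw [hfac] at hx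
  nlinarith [mul_pos (sub_pos.2 h₂) (sub_pos.2 h₃)]

theorem root_bounds_of_one_le (hμ : 1 ≤ μ)
    (hfac : ∀ x, saddleCubic μ x = (x - l₁) * (x - l₂) * (x - l₃))
    (h₃ : l₃ < 0) (h₂₀ : 0 < l₂) (h₂₁ : l₂ < 1) (h₁ : 1 < l₁) :
    l₃ ≤ 2 * cos (5 * π / 7) ∧ 2 * cos (3 * π / 7) ≤ l₂ ∧ 2 * cos (π / 7) ≤ l₁ := by
  have hπ := pi_pos
  have root₅ : saddleCubic 1 (2 * cos (5 * π / 7)) = 0 := by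
    simpa using one_two_cos_odd_mul_pi_div_seven (k := 5) (by decide) (by norm_num)
  have root₃ : saddleCubic 1 (2 * cos (3 * π / 7)) = 0 := by
    simpa using one_two_cos_odd_mul_pi_div_seven (k := 3) (by decide) (by norm_num)
  have root₁ : saddleCubic 1 (2 * cos (π / 7)) = 0 := by
    simpa using one_two_cos_odd_mul_pi_div_seven (k := 1) (by decide) (by norm_num)
  have cos₅ : cos (5 * π / 7) < 0 := cos_neg_of_pi_div_two_lt_of_lt (by linarith) (by linarith)
  have cos₃ : 0 < cos (3 * π / 7) := cos_pos_of_mem_Ioo ⟨by linarith, by linarith⟩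
  have cos₃' : cos (3 * π / 7) < 1 / 2 := by
    rw [← cos_pi_div_three]
    exact cos_lt_cos_of_nonneg_of_le_pi (by positivity) (by linarith) (by linarith)
  have cos₁ : 1 / 2 < cos (π / 7) := by
    rw [← cos_pi_div_three]
    exact cos_lt_cos_of_nonneg_of_le_pi (by positivity) (by linarith) (by linarith)
  refine ⟨smallest_root_le_of_nonneg hfac ?_ (by linarith) (by linarith),
    le_middle_root_of_nonneg hfac ?_ (by linarith) (by linarith),
    le_largest_root_of_nonpos hfac ?_ (by linarith) (by linarith)⟩
  · rw [eq_one_add, root₅, zero_add]; exact mul_nonneg (by linarith) (by linarith)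
  · rw [eq_one_add, root₃, zero_add]; exact mul_nonneg (by linarith) (by linarith)
  · rw [eq_one_add, root₁, zero_add]
    exact mul_nonpos_of_nonneg_of_nonpos (by linarith) (by linarith)

end

end saddleCubic

/-- for every `μ > 0` the cubic `p_μ(λ) = λ³ − λ² − (1 + μ)λ + μ` has
three distinct real roots `λ₃ < λ₂ < λ₁` with `λ₃ < 0`, `0 < λ₂ < 1`, `λ₁ > 1`.
Moreover, if `μ ≥ 1` then `λ₃ ≤ 2cos(5π/7)`, `2cos(3π/7) ≤ λ₂ < 1`, and
`λ₁ ≥ 2cos(π/7)`. -/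
theorem stmt_12 (μ : ℝ) (hμ : 0 < μ) :
    ∃ l₁ l₂ l₃ : ℝ,
      l₃ < l₂ ∧ l₂ < l₁ ∧
      l₁ ^ 3 - l₁ ^ 2 - (1 + μ) * l₁ + μ = 0 ∧
      l₂ ^ 3 - l₂ ^ 2 - (1 + μ) * l₂ + μ = 0 ∧
      l₃ ^ 3 - l₃ ^ 2 - (1 + μ) * l₃ + μ = 0 ∧
      (∀ r : ℝ, r ^ 3 - r ^ 2 - (1 + μ) * r + μ = 0 → r = l₁ ∨ r = l₂ ∨ r = l₃) ∧
      l₃ < 0 ∧ 0 < l₂ ∧ l₂ < 1 ∧ 1 < l₁ ∧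
      (1 ≤ μ →
        l₃ ≤ 2 * Real.cos (5 * π / 7) ∧
        2 * Real.cos (3 * π / 7) ≤ l₂ ∧
        2 * Real.cos (π / 7) ≤ l₁) := by
  obtain ⟨l₁, l₂, l₃, h₃, h₂₀, h₂₁, h₁, hfac⟩ := saddleCubic.exists_roots_eq_mul_sub hμ
  have root_iff (r : ℝ) : saddleCubic μ r = 0 ↔ r = l₁ ∨ r = l₂ ∨ r = l₃ := by
    simp only [hfac, mul_eq_zero, sub_eq_zero, or_assoc]
  refine ⟨l₁, l₂, l₃, by linarith, by linarith, (root_iff l₁).2 (by simp),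
    (root_iff l₂).2 (by simp), (root_iff l₃).2 (by simp), fun r => (root_iff r).1,
    h₃, h₂₀, h₂₁, h₁, fun hμ₁ => saddleCubic.root_bounds_of_one_le hμ₁ hfac h₃ h₂₀ h₂₁ h₁⟩
end

section
/- For μ > 0 let λ₁(μ) denote the largest real root and λ₃(μ) the smallest real root of the cubic p_μ(λ) = λ³ − λ² − (1 + μ)λ + μ. Then λ₁(μ)/√μ → 1 and λ₃(μ)/√μ → −1 as μ → ∞. -/
/-!
With `s = √μ`, `p_μ(x) = (x − 1)(x − s)(x + s) − x`, so `p_μ(s) = −s ≤ 0` and `p_μ(−s) = s ≥ 0`,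
while the factorisation forces `p_μ > 0` on `[s + 2, ∞)` and `p_μ < 0` on `(−∞, −s − 1]`.
Hence the largest root lies in `[s, s + 2]` and the smallest in `[−s − 1, −s]`: both differ from
`±√μ` by a bounded amount, which vanishes after division by `√μ → ∞`.
-/

open Filter Real Topology

namespace StabilityCubic

def cubic (μ x : ℝ) : ℝ := x ^ 3 - x ^ 2 - (1 + μ) * x + μ

variable {μ : ℝ}

lemma cubic_eq_of_sqrt (hμ : 0 ≤ μ) (x : ℝ) :
    cubic μ x = (x - 1) * (x - √μ) * (x + √μ) - x := by
  have hs : √μ ^ 2 = μ := sq_sqrt hμ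
  unfold cubic; linear_combination (x - 1) * hs

lemma cubic_sqrt (hμ : 0 ≤ μ) : cubic μ √μ = -√μ := by
  rw [cubic_eq_of_sqrt hμ]; ring

lemma cubic_neg_sqrt (hμ : 0 ≤ μ) : cubic μ (-√μ) = √μ := by
  rw [cubic_eq_of_sqrt hμ]; ring

lemma cubic_pos_of_sqrt_add_two_le (hμ : 0 ≤ μ) {x : ℝ} (hx : √μ + 2 ≤ x) :
    0 < cubic μ x := by
  have hs := sqrt_nonneg μ
  have hpos : 0 < (x - 1) * (x + √μ) := by nlinarith
  have hgap : 2 * ((x - 1) * (x + √μ)) ≤ (x - 1) * (x - √μ) * (x + √μ) := by nlinarith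
  rw [cubic_eq_of_sqrt hμ]
  nlinarith

lemma cubic_neg_of_le_neg_sqrt_sub_one (hμ : 0 ≤ μ) {x : ℝ} (hx : x ≤ -√μ - 1) :
    cubic μ x < 0 := by
  have hs := sqrt_nonneg μ
  have hpos : 0 < (x - 1) * (x - √μ) := by nlinarith
  have hgap : (x - 1) * (x - √μ) * (x + √μ) ≤ -((x - 1) * (x - √μ)) := by nlinarith
  rw [cubic_eq_of_sqrt hμ]
  nlinarith

lemma root_lt_sqrt_add_two (hμ : 0 ≤ μ) {r : ℝ} (hr : cubic μ r = 0) : r < √μ + 2 := by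
  by_contra! h
  exact (cubic_pos_of_sqrt_add_two_le hμ h).ne' hr

lemma neg_sqrt_sub_one_lt_root (hμ : 0 ≤ μ) {r : ℝ} (hr : cubic μ r = 0) : -√μ - 1 < r := by
  by_contra! h
  exact (cubic_neg_of_le_neg_sqrt_sub_one hμ h).ne hr

lemma exists_cubic_root_mem_Icc {a b : ℝ} (hab : a ≤ b) (ha : cubic μ a ≤ 0)
    (hb : 0 ≤ cubic μ b) : ∃ r ∈ Set.Icc a b, cubic μ r = 0 :=
  intermediate_value_Icc hab (by unfold cubic; fun_prop) ⟨ha, hb⟩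

lemma exists_cubic_root_mem_Icc_sqrt (hμ : 0 ≤ μ) :
    ∃ r ∈ Set.Icc √μ (√μ + 2), cubic μ r = 0 :=
  exists_cubic_root_mem_Icc (by linarith) (by simp [cubic_sqrt hμ])
    (cubic_pos_of_sqrt_add_two_le hμ le_rfl).le

lemma exists_cubic_root_mem_Icc_neg_sqrt (hμ : 0 ≤ μ) :
    ∃ r ∈ Set.Icc (-√μ - 1) (-√μ), cubic μ r = 0 :=
  exists_cubic_root_mem_Icc (by linarith) (cubic_neg_of_le_neg_sqrt_sub_one hμ le_rfl).le
    (by simp [cubic_neg_sqrt hμ])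

lemma abs_sub_sqrt_le_of_greatest_root (hμ : 0 ≤ μ) {L : ℝ} (hL : cubic μ L = 0)
    (hmax : ∀ r, cubic μ r = 0 → r ≤ L) : |L - √μ| ≤ 2 := by
  obtain ⟨r, hr, hr0⟩ := exists_cubic_root_mem_Icc_sqrt hμ
  have hrL := hmax r hr0
  have hL_lt := root_lt_sqrt_add_two hμ hL
  rw [abs_le]; constructor <;> linarith [hr.1]

lemma abs_add_sqrt_le_of_least_root (hμ : 0 ≤ μ) {L : ℝ} (hL : cubic μ L = 0)
    (hmin : ∀ r, cubic μ r = 0 → L ≤ r) : |L + √μ| ≤ 1 := by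
  obtain ⟨r, hr, hr0⟩ := exists_cubic_root_mem_Icc_neg_sqrt hμ
  have hLr := hmin r hr0
  have hlt_L := neg_sqrt_sub_one_lt_root hμ hL
  rw [abs_le]; constructor <;> linarith [hr.2]

end StabilityCubic

lemma tendsto_div_of_abs_sub_mul_le {α : Type*} {l : Filter α} {f g : α → ℝ} {c C : ℝ}
    (hg : Tendsto g l atTop) (hf : ∀ᶠ x in l, |f x - c * g x| ≤ C) :
    Tendsto (fun x => f x / g x) l (𝓝 c) := by
  have herr : Tendsto (fun x => (f x - c * g x) * (g x)⁻¹) l (𝓝 0) :=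
    isBoundedUnder_le_mul_tendsto_zero (isBoundedUnder_of_eventually_le hf)
      (tendsto_inv_atTop_zero.comp hg)
  have hc := herr.const_add c
  rw [add_zero] at hc
  refine hc.congr' ?_
  filter_upwards [hg.eventually_gt_atTop 0] with x hx
  field_simp
  ring

/-- for `μ > 0` let `λ₁(μ)` be the largest and `λ₃(μ)` the smallest real
root of `p_μ(λ) = λ³ − λ² − (1 + μ)λ + μ`. Then `λ₁(μ)/√μ → 1` and `λ₃(μ)/√μ → −1`
as `μ → ∞`. -/
theorem stmt_13 (lam₁ lam₃ : ℝ → ℝ)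
    (h₁ : ∀ μ : ℝ, 0 < μ →
      (lam₁ μ) ^ 3 - (lam₁ μ) ^ 2 - (1 + μ) * lam₁ μ + μ = 0 ∧
      ∀ r : ℝ, r ^ 3 - r ^ 2 - (1 + μ) * r + μ = 0 → r ≤ lam₁ μ)
    (h₃ : ∀ μ : ℝ, 0 < μ →
      (lam₃ μ) ^ 3 - (lam₃ μ) ^ 2 - (1 + μ) * lam₃ μ + μ = 0 ∧
      ∀ r : ℝ, r ^ 3 - r ^ 2 - (1 + μ) * r + μ = 0 → lam₃ μ ≤ r) :
    Tendsto (fun μ : ℝ => lam₁ μ / Real.sqrt μ) atTop (nhds 1) ∧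
      Tendsto (fun μ : ℝ => lam₃ μ / Real.sqrt μ) atTop (nhds (-1)) := by
  constructor
  · refine tendsto_div_of_abs_sub_mul_le tendsto_sqrt_atTop (C := 2) ?_
    filter_upwards [eventually_gt_atTop 0] with μ hμ
    rw [one_mul]
    exact StabilityCubic.abs_sub_sqrt_le_of_greatest_root hμ.le (h₁ μ hμ).1 (h₁ μ hμ).2
  · refine tendsto_div_of_abs_sub_mul_le tendsto_sqrt_atTop (C := 1) ?_
    filter_upwards [eventually_gt_atTop 0] with μ hμ
    rw [neg_one_mul, sub_neg_eq_add]
    exact StabilityCubic.abs_add_sqrt_le_of_least_root hμ.le (h₃ μ hμ).1 (h₃ μ hμ).2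
end

section
/- (BFBt similarity) Assume S₁ ∈ ℝ^{m×m} is invertible and C ∈ ℝ^{p×m} has reduced singular value decomposition Cᵀ = Û Σ̂ Vᵀ, where Û ∈ ℝ^{m×p} satisfies ÛᵀÛ = I_p, Σ̂ ∈ ℝ^{p×p} is diagonal and invertible, and V ∈ ℝ^{p×p} is orthogonal. Define the BFBt approximation Ŝ₂⁻¹ = (C Cᵀ)⁻¹ C S₁ Cᵀ (C Cᵀ)⁻¹ and S₂ = C S₁⁻¹ Cᵀ. Then C Cᵀ is invertible and Ŝ₂⁻¹ S₂ = V Σ̂⁻¹ (Ûᵀ S₁ Û)(Ûᵀ S₁⁻¹ Û) Σ̂ Vᵀ; in particular Ŝ₂⁻¹ S₂ is similar to W = (Ûᵀ S₁ Û)(Ûᵀ S₁⁻¹ Û) and has the same characteristic polynomial as W. -/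
open Matrix

/-!
Write the reduced SVD as `Cᵀ = Û R` with `R = Σ̂ Vᵀ` invertible. Since `ÛᵀÛ = I`, `CCᵀ = RᵀR`
is invertible and `(CCᵀ)⁻¹ C = R⁻¹ Ûᵀ`, so `Cᵀ (CCᵀ)⁻¹ C = Û Ûᵀ` and the product
`(CCᵀ)⁻¹ C S₁ Cᵀ (CCᵀ)⁻¹ · C S₁⁻¹ Cᵀ` collapses to `R⁻¹ (Ûᵀ S₁ Û)(Ûᵀ S₁⁻¹ Û) R`.
-/

namespace Matrix

section Factorization

variable {m p K : Type*} [Fintype m] [Fintype p] [DecidableEq p] [CommRing K]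
  {C : Matrix p m K} {U : Matrix m p K} {R : Matrix p p K}

theorem mul_transpose_self_eq_of_transpose_eq_mul (hC : Cᵀ = U * R) (hU : Uᵀ * U = 1) :
    C * Cᵀ = Rᵀ * R := by
  rw [← transpose_transpose C, hC, transpose_transpose, transpose_mul, Matrix.mul_assoc,
    ← Matrix.mul_assoc Uᵀ, hU, Matrix.one_mul]

theorem isUnit_det_mul_transpose_self_of_transpose_eq_mul (hC : Cᵀ = U * R) (hU : Uᵀ * U = 1)
    (hR : IsUnit R.det) : IsUnit (C * Cᵀ).det := by
  rw [mul_transpose_self_eq_of_transpose_eq_mul hC hU, det_mul]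
  exact (isUnit_det_transpose R hR).mul hR

theorem inv_mul_transpose_self_mul_eq_of_transpose_eq_mul (hC : Cᵀ = U * R) (hU : Uᵀ * U = 1)
    (hR : IsUnit R.det) : (C * Cᵀ)⁻¹ * C = R⁻¹ * Uᵀ := by
  have hC' : C = Rᵀ * Uᵀ := by rw [← transpose_transpose C, hC, transpose_mul]
  rw [mul_transpose_self_eq_of_transpose_eq_mul hC hU, mul_inv_rev, hC', ← Matrix.mul_assoc,
    Matrix.mul_assoc R⁻¹, nonsing_inv_mul _ (isUnit_det_transpose R hR), Matrix.mul_one]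

theorem bfbt_mul_eq_conj_of_transpose_eq_mul (hC : Cᵀ = U * R) (hU : Uᵀ * U = 1)
    (hR : IsUnit R.det) (A B : Matrix m m K) :
    (C * Cᵀ)⁻¹ * (C * A * Cᵀ) * (C * Cᵀ)⁻¹ * (C * B * Cᵀ) =
      R⁻¹ * ((Uᵀ * A * U) * (Uᵀ * B * U)) * R := by
  have hCt : Cᵀ * ((C * Cᵀ)⁻¹ * C) = U * Uᵀ := by
    rw [inv_mul_transpose_self_mul_eq_of_transpose_eq_mul hC hU hR, hC, Matrix.mul_assoc,
      ← Matrix.mul_assoc R, mul_nonsing_inv _ hR, Matrix.one_mul]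
  calc (C * Cᵀ)⁻¹ * (C * A * Cᵀ) * (C * Cᵀ)⁻¹ * (C * B * Cᵀ)
      = ((C * Cᵀ)⁻¹ * C) * A * (Cᵀ * ((C * Cᵀ)⁻¹ * C)) * B * Cᵀ := by
        simp only [Matrix.mul_assoc]
    _ = R⁻¹ * ((Uᵀ * A * U) * (Uᵀ * B * U)) * R := by
        rw [hCt, inv_mul_transpose_self_mul_eq_of_transpose_eq_mul hC hU hR, hC]
        simp only [Matrix.mul_assoc]

end Factorization

theorem charpoly_inv_mul_mul_self {n R : Type*} [Fintype n] [DecidableEq n] [CommRing R]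
    (P A : Matrix n n R) (hP : IsUnit P.det) : (P⁻¹ * A * P).charpoly = A.charpoly := by
  rw [Matrix.mul_assoc, charpoly_mul_comm, Matrix.mul_assoc, mul_nonsing_inv _ hP,
    Matrix.mul_one]

end Matrix

theorem stmt_14_general (m p : ℕ)
    (S₁ : Matrix (Fin m) (Fin m) ℝ)
    (C : Matrix (Fin p) (Fin m) ℝ)
    (hatU : Matrix (Fin m) (Fin p) ℝ) (Sig V : Matrix (Fin p) (Fin p) ℝ)
    (hSVD : Cᵀ = hatU * Sig * Vᵀ) (hU : hatUᵀ * hatU = 1)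
    (hSig : IsUnit Sig.det)
    (hV' : V * Vᵀ = 1)
    (hatS₂inv : Matrix (Fin p) (Fin p) ℝ)
    (hhatS₂inv : hatS₂inv = (C * Cᵀ)⁻¹ * (C * S₁ * Cᵀ) * (C * Cᵀ)⁻¹)
    (S₂ : Matrix (Fin p) (Fin p) ℝ) (hS₂def : S₂ = C * S₁⁻¹ * Cᵀ) :
    IsUnit (C * Cᵀ).det ∧
      hatS₂inv * S₂ =
        V * Sig⁻¹ * ((hatUᵀ * S₁ * hatU) * (hatUᵀ * S₁⁻¹ * hatU)) * Sig * Vᵀ ∧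
      (hatS₂inv * S₂).charpoly = ((hatUᵀ * S₁ * hatU) * (hatUᵀ * S₁⁻¹ * hatU)).charpoly := by
  have hC : Cᵀ = hatU * (Sig * Vᵀ) := by rw [hSVD, Matrix.mul_assoc]
  have hR : IsUnit (Sig * Vᵀ).det := by
    rw [det_mul]; exact hSig.mul (isUnit_det_of_left_inverse hV')
  have hRinv : (Sig * Vᵀ)⁻¹ = V * Sig⁻¹ := by rw [Matrix.mul_inv_rev, inv_eq_left_inv hV']
  have hprod : hatS₂inv * S₂ =
      (Sig * Vᵀ)⁻¹ * ((hatUᵀ * S₁ * hatU) * (hatUᵀ * S₁⁻¹ * hatU)) * (Sig * Vᵀ) := by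
    rw [hhatS₂inv, hS₂def, bfbt_mul_eq_conj_of_transpose_eq_mul hC hU hR]
  refine ⟨isUnit_det_mul_transpose_self_of_transpose_eq_mul hC hU hR, ?_, ?_⟩
  · rw [hprod, hRinv]
    simp only [Matrix.mul_assoc]
  · rw [hprod, charpoly_inv_mul_mul_self _ _ hR]

/-- BFBt similarity: assume `S₁` invertible and `Cᵀ = Û Σ̂ Vᵀ` a reduced
SVD (`ÛᵀÛ = I_p`, `Σ̂` diagonal and invertible, `V` orthogonal). With
`Ŝ₂⁻¹ = (CCᵀ)⁻¹ C S₁ Cᵀ (CCᵀ)⁻¹` and `S₂ = C S₁⁻¹ Cᵀ`, the matrix `CCᵀ` is invertible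
and `Ŝ₂⁻¹ S₂ = V Σ̂⁻¹ (Ûᵀ S₁ Û)(Ûᵀ S₁⁻¹ Û) Σ̂ Vᵀ`; in particular `Ŝ₂⁻¹ S₂` is similar
to `W = (Ûᵀ S₁ Û)(Ûᵀ S₁⁻¹ Û)` and has the same characteristic polynomial as `W`. -/
theorem stmt_14 (m p : ℕ)
    (S₁ : Matrix (Fin m) (Fin m) ℝ) (hS₁ : IsUnit S₁.det)
    (C : Matrix (Fin p) (Fin m) ℝ)
    (hatU : Matrix (Fin m) (Fin p) ℝ) (Sig V : Matrix (Fin p) (Fin p) ℝ)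
    (hSVD : Cᵀ = hatU * Sig * Vᵀ) (hU : hatUᵀ * hatU = 1)
    (hSigDiag : Sig.IsDiag) (hSig : IsUnit Sig.det)
    (hV : Vᵀ * V = 1) (hV' : V * Vᵀ = 1)
    (hatS₂inv : Matrix (Fin p) (Fin p) ℝ)
    (hhatS₂inv : hatS₂inv = (C * Cᵀ)⁻¹ * (C * S₁ * Cᵀ) * (C * Cᵀ)⁻¹)
    (S₂ : Matrix (Fin p) (Fin p) ℝ) (hS₂def : S₂ = C * S₁⁻¹ * Cᵀ) :
    IsUnit (C * Cᵀ).det ∧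
      hatS₂inv * S₂ =
        V * Sig⁻¹ * ((hatUᵀ * S₁ * hatU) * (hatUᵀ * S₁⁻¹ * hatU)) * Sig * Vᵀ ∧
      (hatS₂inv * S₂).charpoly = ((hatUᵀ * S₁ * hatU) * (hatUᵀ * S₁⁻¹ * hatU)).charpoly :=
  stmt_14_general m p S₁ C hatU Sig V hSVD hU hSig hV' hatS₂inv hhatS₂inv S₂ hS₂def
end

section
/- Let S₁ ∈ ℝ^{m×m} be invertible, U = [Û Ũ] ∈ ℝ^{m×m} orthogonal with Û ∈ ℝ^{m×p}, M = Ûᵀ S₁ Û and S = Ũᵀ S₁ Ũ − (Ũᵀ S₁ Û) M⁻¹ (Ûᵀ S₁ Ũ) both invertible, and W = I_p + (Ûᵀ S₁ Ũ) S⁻¹ (Ũᵀ S₁ Û) M⁻¹. If p > m/2, then 1 is an eigenvalue of W whose eigenspace has dimension at least 2p − m; indeed W x = x for every x = M z with z ∈ ker(Ũᵀ S₁ Û), a subspace of dimension at least 2p − m. -/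
open Matrix

/-! If `B z = 0` then `M z` is fixed by `W = 1 + A B M⁻¹`, and `z ↦ M z` is injective, so
the `1`-eigenspace of `W` contains an isomorphic copy of `ker B`. Here `B = Ũᵀ S₁ Û` maps
`ℝᵖ` to `ℝ^(m-p)`, so rank–nullity gives `dim ker B ≥ p - (m - p) = 2p - m`, which is
positive when `p > m/2`. -/

namespace Matrix

variable {R K ι κ : Type*} [Fintype ι] [Fintype κ]

theorem one_add_mul_mul_nonsing_inv_mulVec_mulVec [CommRing R] [DecidableEq ι]
    {M : Matrix ι ι R} (hM : IsUnit M.det) (A : Matrix ι κ R) {B : Matrix κ ι R} {z : ι → R} (hz : B *ᵥ z = 0) :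
    (1 + A * B * M⁻¹) *ᵥ (M *ᵥ z) = M *ᵥ z := by
  rw [add_mulVec, one_mulVec, mulVec_mulVec, Matrix.mul_assoc, nonsing_inv_mul M hM,
    Matrix.mul_one, ← mulVec_mulVec, hz, mulVec_zero, add_zero]

theorem card_sub_card_le_finrank_ker_mulVecLin [Field K] (B : Matrix κ ι K) :
    Fintype.card ι - Fintype.card κ ≤ Module.finrank K (LinearMap.ker B.mulVecLin) := by
  have hrange : Module.finrank K (LinearMap.range B.mulVecLin) ≤ Fintype.card κ :=
    (Submodule.finrank_le _).trans (Module.finrank_fintype_fun_eq_card K).le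
  have hsum := LinearMap.finrank_range_add_finrank_ker B.mulVecLin
  rw [Module.finrank_fintype_fun_eq_card] at hsum
  omega

theorem finrank_ker_le_finrank_eigenspace_one_add_mul_mul_nonsing_inv [Field K] [DecidableEq ι]
    {M : Matrix ι ι K} (hM : IsUnit M.det) (A : Matrix ι κ K) (B : Matrix κ ι K) :
    Module.finrank K (LinearMap.ker B.mulVecLin) ≤
      Module.finrank K (Module.End.eigenspace (1 + A * B * M⁻¹).mulVecLin 1) := by
  have hmaps : ∀ z ∈ LinearMap.ker B.mulVecLin,
      M.mulVecLin z ∈ Module.End.eigenspace (1 + A * B * M⁻¹).mulVecLin 1 := fun z hz => by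
    rw [Module.End.mem_eigenspace_iff, one_smul]
    exact one_add_mul_mul_nonsing_inv_mulVec_mulVec hM A hz
  have hinj : Function.Injective M.mulVec :=
    mulVec_injective_iff_isUnit.mpr ((isUnit_iff_isUnit_det M).mpr hM)
  refine LinearMap.finrank_le_finrank_of_injective (f := M.mulVecLin.restrict hmaps) ?_
  exact fun x y hxy => Subtype.ext (hinj (congrArg Subtype.val hxy))

end Matrix

theorem stmt_16_general (m p : ℕ) (hpm : p ≤ m) (hp2 : m < 2 * p)
    (S₁ : Matrix (Fin m) (Fin m) ℝ)
    (hatU : Matrix (Fin m) (Fin p) ℝ) (tldU : Matrix (Fin m) (Fin (m - p)) ℝ)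
    (M : Matrix (Fin p) (Fin p) ℝ)
    (S : Matrix (Fin (m - p)) (Fin (m - p)) ℝ)
    (hMu : IsUnit M.det)
    (W : Matrix (Fin p) (Fin p) ℝ)
    (hW : W = 1 + (hatUᵀ * S₁ * tldU) * S⁻¹ * (tldUᵀ * S₁ * hatU) * M⁻¹) :
    (∀ z : Fin p → ℝ, (tldUᵀ * S₁ * hatU) *ᵥ z = 0 → W *ᵥ (M *ᵥ z) = M *ᵥ z) ∧
      2 * p - m ≤ Module.finrank ℝ (LinearMap.ker (tldUᵀ * S₁ * hatU).mulVecLin) ∧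
      Module.End.HasEigenvalue W.mulVecLin 1 ∧
      2 * p - m ≤ Module.finrank ℝ (Module.End.eigenspace W.mulVecLin 1) := by
  subst hW
  have hker := card_sub_card_le_finrank_ker_mulVecLin (tldUᵀ * S₁ * hatU)
  have heig := finrank_ker_le_finrank_eigenspace_one_add_mul_mul_nonsing_inv hMu
    (hatUᵀ * S₁ * tldU * S⁻¹) (tldUᵀ * S₁ * hatU)
  simp only [Fintype.card_fin] at hker
  refine ⟨fun z hz => one_add_mul_mul_nonsing_inv_mulVec_mulVec hMu _ hz, by omega, ?_,
    by omega⟩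
  rw [Module.End.hasEigenvalue_iff, ne_eq, ← Submodule.finrank_eq_zero]
  omega

/-- with `S₁` invertible, `U = [Û Ũ]` orthogonal, `M = Ûᵀ S₁ Û` and
`S = Ũᵀ S₁ Ũ − (Ũᵀ S₁ Û) M⁻¹ (Ûᵀ S₁ Ũ)` invertible, and
`W = I_p + (Ûᵀ S₁ Ũ) S⁻¹ (Ũᵀ S₁ Û) M⁻¹`: if `p > m/2`, then `1` is an eigenvalue of
`W` whose eigenspace has dimension at least `2p − m`; indeed `W x = x` for every
`x = M z` with `z ∈ ker(Ũᵀ S₁ Û)`, a subspace of dimension at least `2p − m`. -/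
theorem stmt_16 (m p : ℕ) (hpm : p ≤ m) (hp2 : m < 2 * p)
    (S₁ : Matrix (Fin m) (Fin m) ℝ) (hS₁ : IsUnit S₁.det)
    (hatU : Matrix (Fin m) (Fin p) ℝ) (tldU : Matrix (Fin m) (Fin (m - p)) ℝ)
    (hUorth₁ : (fromCols hatU tldU)ᵀ * fromCols hatU tldU = 1)
    (hUorth₂ : fromCols hatU tldU * (fromCols hatU tldU)ᵀ = 1)
    (M : Matrix (Fin p) (Fin p) ℝ) (hM : M = hatUᵀ * S₁ * hatU)
    (S : Matrix (Fin (m - p)) (Fin (m - p)) ℝ)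
    (hS : S = tldUᵀ * S₁ * tldU - (tldUᵀ * S₁ * hatU) * M⁻¹ * (hatUᵀ * S₁ * tldU))
    (hMu : IsUnit M.det) (hSu : IsUnit S.det)
    (W : Matrix (Fin p) (Fin p) ℝ)
    (hW : W = 1 + (hatUᵀ * S₁ * tldU) * S⁻¹ * (tldUᵀ * S₁ * hatU) * M⁻¹) :
    (∀ z : Fin p → ℝ, (tldUᵀ * S₁ * hatU) *ᵥ z = 0 → W *ᵥ (M *ᵥ z) = M *ᵥ z) ∧
      2 * p - m ≤ Module.finrank ℝ (LinearMap.ker (tldUᵀ * S₁ * hatU).mulVecLin) ∧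
      Module.End.HasEigenvalue W.mulVecLin 1 ∧
      2 * p - m ≤ Module.finrank ℝ (Module.End.eigenspace W.mulVecLin 1) :=
  stmt_16_general m p hpm hp2 S₁ hatU tldU M S hMu W hW
end

section
/- Let S₁ ∈ ℝ^{m×m} be symmetric positive definite and let Û ∈ ℝ^{m×p} satisfy Ûᵀ Û = I_p (p ≤ m). Then every eigenvalue of W = (Ûᵀ S₁ Û)(Ûᵀ S₁⁻¹ Û) is real and is greater than or equal to 1. Consequently, every generalized eigenvalue μ of S₂ z = μ Ŝ₂ z with the BFBt approximation Ŝ₂⁻¹ = (C Cᵀ)⁻¹ C S₁ Cᵀ (C Cᵀ)⁻¹ and Cᵀ = Û Σ̂ Vᵀ a reduced SVD satisfies μ ≥ 1. -/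
/-!
Write `A = Ûᵀ S₁ Û` and `B = Ûᵀ S₁⁻¹ Û`. Since `Ûᵀ Û = 1`, the difference `B - A⁻¹` equals
`Kᵀ S₁ K` for `K = S₁⁻¹ Û - Û A⁻¹`, so `A⁻¹ ≤ B` in the Loewner order. If `A B v = μ v` with
`v ≠ 0`, then `μ A⁻¹ v = B v`, hence `μ (v* A⁻¹ v) = v* B v ≥ v* A⁻¹ v > 0`, which forces `μ`
to be real and at least `1`. For the BFBt matrix, `Cᵀ = Û X` with `X = Σ̂ Vᵀ` invertible gives
`Ŝ₂⁻¹ S₂ = X⁻¹ (A B) X`, so its eigenvalues are those of `A B`.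
-/

open Matrix
open scoped ComplexOrder MatrixOrder

namespace Matrix

variable {m n : Type*} [Fintype m] [Fintype n] [DecidableEq n]

theorem exists_mulVec_eq_smul_of_isRoot_charpoly_s17 {K : Type*} [Field K] {M : Matrix n n K} {μ : K}
    (h : M.charpoly.IsRoot μ) : ∃ v ≠ 0, M *ᵥ v = μ • v := by
  obtain ⟨v, hv, hMv⟩ := (exists_mulVec_eq_zero_iff (M := scalar n μ - M)).mpr
    (by rwa [← eval_charpoly])
  refine ⟨v, hv, ?_⟩
  rwa [sub_mulVec, sub_eq_zero, scalar_apply, ← smul_one_eq_diagonal, smul_mulVec, one_mulVec,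
    eq_comm] at hMv

theorem map_nonsing_inv {R S : Type*} [CommRing R] [CommRing S] (f : R →+* S) {M : Matrix n n R}
    (hM : IsUnit M.det) : M⁻¹.map f = (M.map f)⁻¹ :=
  (inv_eq_left_inv (by rw [← f.mapMatrix_apply, ← f.mapMatrix_apply, ← map_mul,
    nonsing_inv_mul _ hM, map_one])).symm

theorem mulVec_injective_of_mul_eq_one {R : Type*} [Semiring R] {B : Matrix n m R}
    {U : Matrix m n R} (h : B * U = 1) : Function.Injective U.mulVec :=
  Function.LeftInverse.injective (g := (B *ᵥ ·)) fun x => by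
    simp only [mulVec_mulVec, h, one_mulVec]

section ofReal

variable {M : Matrix n n ℝ}

theorem PosSemidef.map_ofReal (hM : M.PosSemidef) : (M.map Complex.ofReal).PosSemidef := by
  obtain ⟨R, rfl⟩ := CStarAlgebra.nonneg_iff_eq_star_mul_self.mp hM.nonneg
  rw [star_eq_conjTranspose, show (Complex.ofReal : ℝ → ℂ) = Complex.ofRealHom from rfl,
    Matrix.map_mul, conjTranspose_map _ fun x => by simp]
  exact posSemidef_conjTranspose_mul_self _

theorem PosDef.map_ofReal (hM : M.PosDef) : (M.map Complex.ofReal).PosDef :=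
  hM.posSemidef.map_ofReal.posDef_iff_isUnit.mpr (hM.isUnit.map Complex.ofRealHom.mapMatrix)

theorem PosDef.inv_map_ofReal_le {B : Matrix n n ℝ} (hM : M.PosDef) (hMB : M⁻¹ ≤ B) :
    (M.map Complex.ofReal)⁻¹ ≤ B.map Complex.ofReal := by
  have hsub := (le_iff.mp hMB).map_ofReal
  rwa [Matrix.map_sub _ fun _ _ => Complex.ofReal_sub _ _,
    show (Complex.ofReal : ℝ → ℂ) = Complex.ofRealHom from rfl,
    map_nonsing_inv _ ((isUnit_iff_isUnit_det M).mp hM.isUnit), ← le_iff] at hsub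

end ofReal

variable {𝕜 : Type*} [RCLike 𝕜]

theorem PosDef.inv_conjTranspose_mul_mul_le [DecidableEq m] {S : Matrix m m 𝕜} (hS : S.PosDef)
    {U : Matrix m n 𝕜} (hU : Uᴴ * U = 1) : (Uᴴ * S * U)⁻¹ ≤ Uᴴ * S⁻¹ * U := by
  set A := Uᴴ * S * U
  have hA : A.PosDef := hS.conjTranspose_mul_mul_same (mulVec_injective_of_mul_eq_one hU)
  have hSdet := (isUnit_iff_isUnit_det S).mp hS.isUnit
  have hAdet := (isUnit_iff_isUnit_det A).mp hA.isUnit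
  have hUU (X : Matrix n n 𝕜) : Uᴴ * (U * X) = X := by rw [← Matrix.mul_assoc, hU, Matrix.one_mul]
  have hUSU (X : Matrix n n 𝕜) : Uᴴ * (S * (U * X)) = A * X := by simp only [A, Matrix.mul_assoc]
  have hK : (S⁻¹ * U - U * A⁻¹)ᴴ * S * (S⁻¹ * U - U * A⁻¹) = Uᴴ * S⁻¹ * U - A⁻¹ := by
    simp only [conjTranspose_sub, conjTranspose_mul, hS.inv.isHermitian.eq, hA.inv.isHermitian.eq,
      Matrix.sub_mul, Matrix.mul_sub, Matrix.mul_assoc, nonsing_inv_mul_cancel_left _ _ hSdet,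
      mul_nonsing_inv_cancel_left _ _ hSdet, hU, hUU, hUSU, mul_nonsing_inv _ hAdet, Matrix.mul_one]
    abel
  rw [le_iff, ← hK]
  exact hS.posSemidef.conjTranspose_mul_mul_same _

theorem one_le_of_mulVec_eq_smul {A B : Matrix n n 𝕜} (hA : A.PosDef) (hAB : A⁻¹ ≤ B)
    {μ : 𝕜} {v : n → 𝕜} (hv : v ≠ 0) (h : (A * B) *ᵥ v = μ • v) : 1 ≤ μ := by
  have hBv : B *ᵥ v = μ • (A⁻¹ *ᵥ v) := by
    rw [← mulVec_smul, ← h, mulVec_mulVec, ← Matrix.mul_assoc,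
      nonsing_inv_mul _ ((isUnit_iff_isUnit_det A).mp hA.isUnit), Matrix.one_mul]
  have hc : 0 < star v ⬝ᵥ (A⁻¹ *ᵥ v) := hA.inv.dotProduct_mulVec_pos hv
  have hcb := (le_iff.mp hAB).dotProduct_mulVec_nonneg v
  rw [sub_mulVec, dotProduct_sub, sub_nonneg, hBv, dotProduct_smul, smul_eq_mul] at hcb
  exact one_le_of_le_mul_right₀ hc hcb

theorem inv_mul_mul_inv_mul_of_transpose_eq_mul {R : Type*} [CommRing R] {C : Matrix n m R}
    {U : Matrix m n R} {X : Matrix n n R} (hC : Cᵀ = U * X) (hU : Uᵀ * U = 1)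
    (hX : IsUnit X.det) (S T : Matrix m m R) :
    (C * Cᵀ)⁻¹ * (C * S * Cᵀ) * (C * Cᵀ)⁻¹ * (C * T * Cᵀ) =
      X⁻¹ * ((Uᵀ * S * U) * (Uᵀ * T * U)) * X := by
  have hC' : C = Xᵀ * Uᵀ := by rw [← transpose_transpose C, hC, transpose_mul]
  have hXT : IsUnit Xᵀ.det := by rwa [det_transpose]
  have hCC : (C * Cᵀ)⁻¹ = X⁻¹ * Xᵀ⁻¹ := by
    rw [hC, hC', Matrix.mul_assoc, ← Matrix.mul_assoc Uᵀ, hU, Matrix.one_mul, mul_inv_rev]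
  rw [hCC, hC, hC']
  simp only [Matrix.mul_assoc, mul_nonsing_inv_cancel_left _ _ hX,
    nonsing_inv_mul_cancel_left _ _ hXT]

theorem mulVec_eq_smul_of_inv_mul_mul {R : Type*} [CommRing R] {W X : Matrix n n R}
    (hX : IsUnit X.det) {μ : R} {z : n → R} (h : (X⁻¹ * W * X) *ᵥ z = μ • z) :
    W *ᵥ (X *ᵥ z) = μ • (X *ᵥ z) := by
  rw [← mulVec_smul, ← h, mulVec_mulVec, mulVec_mulVec, ← Matrix.mul_assoc, ← Matrix.mul_assoc,
    mul_nonsing_inv _ hX, Matrix.one_mul]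

end Matrix

theorem stmt_17_general (m p : ℕ)
    (S₁ : Matrix (Fin m) (Fin m) ℝ) (hS₁ : S₁.PosDef)
    (hatU : Matrix (Fin m) (Fin p) ℝ) (hU : hatUᵀ * hatU = 1)
    (C : Matrix (Fin p) (Fin m) ℝ) (Sig V : Matrix (Fin p) (Fin p) ℝ)
    (hSVD : Cᵀ = hatU * Sig * Vᵀ) (hSig : IsUnit Sig.det)
    (hV : Vᵀ * V = 1) :
    (∀ μ : ℂ,
        ((((hatUᵀ * S₁ * hatU) * (hatUᵀ * S₁⁻¹ * hatU)).map
            (Complex.ofReal : ℝ → ℂ)).charpoly).IsRoot μ →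
          μ.im = 0 ∧ 1 ≤ μ.re) ∧
      ∀ μ : ℝ, ∀ z : Fin p → ℝ, z ≠ 0 →
        (((C * Cᵀ)⁻¹ * (C * S₁ * Cᵀ) * (C * Cᵀ)⁻¹) * (C * S₁⁻¹ * Cᵀ)) *ᵥ z = μ • z →
          1 ≤ μ := by
  have hU' : hatUᴴ * hatU = 1 := by rwa [conjTranspose_eq_transpose_of_trivial]
  have hA : (hatUᴴ * S₁ * hatU).PosDef :=
    hS₁.conjTranspose_mul_mul_same (mulVec_injective_of_mul_eq_one hU')
  have hAB := hS₁.inv_conjTranspose_mul_mul_le hU'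
  simp only [conjTranspose_eq_transpose_of_trivial] at hA hAB
  refine ⟨fun μ hμ => ?_, fun μ z hz hWz => ?_⟩
  · obtain ⟨v, hv, hWv⟩ := exists_mulVec_eq_smul_of_isRoot_charpoly_s17 hμ
    rw [show (Complex.ofReal : ℝ → ℂ) = Complex.ofRealHom from rfl, Matrix.map_mul] at hWv
    have h1 := one_le_of_mulVec_eq_smul hA.map_ofReal (hA.inv_map_ofReal_le hAB) hv hWv
    exact ⟨(Complex.le_def.mp h1).2.symm, (Complex.le_def.mp h1).1⟩
  · have hX : IsUnit (Sig * Vᵀ).det := by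
      rw [det_mul, det_transpose]
      exact hSig.mul (isUnit_det_of_left_inverse hV)
    rw [Matrix.mul_assoc] at hSVD
    rw [inv_mul_mul_inv_mul_of_transpose_eq_mul hSVD hU hX] at hWz
    have hXz : (Sig * Vᵀ) *ᵥ z ≠ 0 := fun h => hz <|
      mulVec_injective_of_isUnit ((isUnit_iff_isUnit_det _).mpr hX) (h.trans (mulVec_zero _).symm)
    exact one_le_of_mulVec_eq_smul hA hAB hXz (mulVec_eq_smul_of_inv_mul_mul hX hWz)

/-- let `S₁` be symmetric positive definite and `Ûᵀ Û = I_p` (`p ≤ m`).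
Then every eigenvalue of `W = (Ûᵀ S₁ Û)(Ûᵀ S₁⁻¹ Û)` is real and at least `1`.
Consequently, every generalized eigenvalue `μ` of `S₂ z = μ Ŝ₂ z` with the BFBt
approximation `Ŝ₂⁻¹ = (CCᵀ)⁻¹ C S₁ Cᵀ (CCᵀ)⁻¹` and `Cᵀ = Û Σ̂ Vᵀ` a reduced SVD
satisfies `μ ≥ 1`. -/
theorem stmt_17 (m p : ℕ) (hpm : p ≤ m)
    (S₁ : Matrix (Fin m) (Fin m) ℝ) (hS₁ : S₁.PosDef)
    (hatU : Matrix (Fin m) (Fin p) ℝ) (hU : hatUᵀ * hatU = 1)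
    (C : Matrix (Fin p) (Fin m) ℝ) (Sig V : Matrix (Fin p) (Fin p) ℝ)
    (hSVD : Cᵀ = hatU * Sig * Vᵀ) (hSigDiag : Sig.IsDiag) (hSig : IsUnit Sig.det)
    (hV : Vᵀ * V = 1) (hV' : V * Vᵀ = 1) :
    (∀ μ : ℂ,
        ((((hatUᵀ * S₁ * hatU) * (hatUᵀ * S₁⁻¹ * hatU)).map
            (Complex.ofReal : ℝ → ℂ)).charpoly).IsRoot μ →
          μ.im = 0 ∧ 1 ≤ μ.re) ∧
      ∀ μ : ℝ, ∀ z : Fin p → ℝ, z ≠ 0 →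
        (((C * Cᵀ)⁻¹ * (C * S₁ * Cᵀ) * (C * Cᵀ)⁻¹) * (C * S₁⁻¹ * Cᵀ)) *ᵥ z = μ • z →
          1 ≤ μ :=
  stmt_17_general m p S₁ hS₁ hatU hU C Sig V hSVD hSig hV
end
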